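/- arXiv:0910.0907 — 8 statements merged into one kernel-verified Lean document; each statement's English description precedes it below -/
import Mathlib

section
/- Let G₁, G₂, G₃ be compact Hausdorff topological groups and let M₁, M₂ ≤ G₁×G₂×G₃ be two closed subgroups, each having full two-dimensional projections (i.e. for each i ≠ j the projection of M_k onto G_i×G_j is all of G_i×G_j, for k = 1,2). For k = 1,2 and i = 1,2,3 let L_{k,i} be the one-dimensional slice of M_k in the i-th coordinate, e.g. L_{k,1} := {g ∈ G₁ : (g,1_{G₂},1_{G₃}) ∈ M_k}. Suppose Φ_i : G_i → G_i are topological group automorphisms and h_i, k_i ∈ G_i for i = 1,2,3 satisfy (h₁,h₂,h₃)·(Φ₁×Φ₂×Φ₃)(M₁)·(k₁,k₂,k₃) = M₂. Then Φ_i(L_{1,i}) = L_{2,i} for i = 1,2,3. -/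
/-! Since `1 ∈ M₂`, the right translation is absorbed: `M₂` is the conjugate of
`(Φ₁ × Φ₂ × Φ₃)(M₁)` by `(h₁, h₂, h₃)`. Taking the `i`-th slice commutes with the coordinatewise
automorphism and turns conjugation by `(h₁, h₂, h₃)` into conjugation by `hᵢ`. The slices of `M₁`
are normal in `Gᵢ` because `M₁` projects onto `Gᵢ`, so this last conjugation does nothing. -/

theorem Subgroup.comap_map_equiv_of_comm {H P : Type*} [Group H] [Group P] {ι : H →* P}
    {ψ : P ≃* P} {φ : H ≃* H} (hcomm : ∀ x, ψ (ι x) = ι (φ x)) (M : Subgroup P) :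
    (M.map ψ).comap ι = (M.comap ι).map φ := by
  ext x
  simp only [Subgroup.map_equiv_eq_comap_symm, Subgroup.mem_comap, MonoidHom.coe_coe]
  rw [← ψ.symm_apply_apply (ι (φ.symm x)), hcomm, φ.apply_symm_apply]

theorem Subgroup.eq_map_conj_of_image_mul_mul {G : Type*} [Group G] {N M : Subgroup G} {h k : G}
    (hNM : (fun p => h * p * k) '' (N : Set G) = M) : M = N.map (MulAut.conj h) := by
  obtain ⟨n, hn, hnk⟩ : (1 : G) ∈ (fun p => h * p * k) '' (N : Set G) := hNM ▸ M.one_mem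
  obtain rfl : k = n⁻¹ * h⁻¹ := by
    rw [eq_inv_of_mul_eq_one_right hnk, mul_inv_rev]
  refine SetLike.coe_injective (hNM.symm.trans (Set.ext fun g => ?_))
  simp only [Set.mem_image, SetLike.mem_coe, Subgroup.coe_map, MonoidHom.coe_coe,
    MulAut.conj_apply]
  constructor
  · rintro ⟨p, hp, rfl⟩
    exact ⟨p * n⁻¹, N.mul_mem hp (N.inv_mem hn), by group⟩
  · rintro ⟨q, hq, rfl⟩
    exact ⟨q * n, N.mul_mem hq hn, by group⟩

namespace MonoidHom

variable {H P Q : Type*} [Group H] [Group P] [Group Q]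

def ConjEquivariant (ι : H →* P) (π : P →* H) : Prop :=
  ∀ p x, ι (π p * x * (π p)⁻¹) = p * ι x * p⁻¹

theorem conjEquivariant_inl : ConjEquivariant (inl H Q) (fst H Q) := by
  intro p x
  ext <;> simp

theorem conjEquivariant_inr : ConjEquivariant (inr H Q) (snd H Q) := by
  intro p x
  ext <;> simp

theorem ConjEquivariant.comp {ι₁ : H →* P} {π₁ : P →* H} {ι₂ : P →* Q} {π₂ : Q →* P}
    (h₂ : ConjEquivariant ι₂ π₂) (h₁ : ConjEquivariant ι₁ π₁) :
    ConjEquivariant (ι₂.comp ι₁) (π₁.comp π₂) := by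
  intro q x
  simp only [comp_apply, h₁ (π₂ q) x, h₂ q (ι₁ x)]

variable {ι : H →* P} {π : P →* H}

theorem ConjEquivariant.comap_normal (hι : ConjEquivariant ι π) {M : Subgroup P}
    (hM : M.map π = ⊤) : (M.comap ι).Normal := by
  refine ⟨fun x hx g => ?_⟩
  obtain ⟨p, hp, rfl⟩ := Subgroup.mem_map.mp (hM ▸ Subgroup.mem_top g : g ∈ M.map π)
  rw [Subgroup.mem_comap, hι]
  exact M.mul_mem (M.mul_mem hp hx) (M.inv_mem hp)

theorem ConjEquivariant.comap_map_conj (hι : ConjEquivariant ι π) (M : Subgroup P) (p : P) :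
    (M.map (MulAut.conj p)).comap ι = (M.comap ι).map (MulAut.conj (π p)) := by
  ext x
  simp only [Subgroup.map_equiv_eq_comap_symm, Subgroup.mem_comap, coe_coe,
    MulAut.conj_symm_apply]
  have h := hι p⁻¹ x
  simp only [map_inv, inv_inv] at h
  rw [h]

theorem ConjEquivariant.comap_map_conj_map_equiv (hι : ConjEquivariant ι π) {M : Subgroup P}
    (hM : M.map π = ⊤) {ψ : P ≃* P} {φ : H ≃* H} (hcomm : ∀ x, ψ (ι x) = ι (φ x)) (p : P) :
    ((M.map ψ).map (MulAut.conj p : P →* P)).comap ι = (M.comap ι).map φ := by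
  have : ((M.comap ι).map (φ : H →* H)).Normal :=
    (hι.comap_normal hM).map (φ : H →* H) φ.surjective
  rw [hι.comap_map_conj, Subgroup.comap_map_equiv_of_comm hcomm, Subgroup.Normal.map_conj_eq]

end MonoidHom

theorem slices_respected_by_translated_automorphism_image_general
    {G₁ G₂ G₃ : Type}
    [Group G₁]
    [Group G₂]
    [Group G₃]
    (M₁ M₂ : Subgroup (G₁ × G₂ × G₃))
    (hM₁f₁₂ : ∀ (g₁ : G₁) (g₂ : G₂), ∃ g₃ : G₃, (g₁, g₂, g₃) ∈ M₁)
    (hM₁f₂₃ : ∀ (g₂ : G₂) (g₃ : G₃), ∃ g₁ : G₁, (g₁, g₂, g₃) ∈ M₁)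
    (Φ₁ : G₁ ≃* G₁) (Φ₂ : G₂ ≃* G₂) (Φ₃ : G₃ ≃* G₃)
    (h₁ k₁ : G₁) (h₂ k₂ : G₂) (h₃ k₃ : G₃)
    (hrel :
      (fun p : G₁ × G₂ × G₃ => (h₁, h₂, h₃) * p * (k₁, k₂, k₃)) ''
          ((fun p : G₁ × G₂ × G₃ => (Φ₁ p.1, Φ₂ p.2.1, Φ₃ p.2.2)) '' (M₁ : Set (G₁ × G₂ × G₃)))
        = (M₂ : Set (G₁ × G₂ × G₃))) :
    Φ₁ '' {g : G₁ | (g, 1, 1) ∈ M₁} = {g : G₁ | (g, 1, 1) ∈ M₂} ∧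
      Φ₂ '' {g : G₂ | (1, g, 1) ∈ M₁} = {g : G₂ | (1, g, 1) ∈ M₂} ∧
      Φ₃ '' {g : G₃ | (1, 1, g) ∈ M₁} = {g : G₃ | (1, 1, g) ∈ M₂} := by
  let ψ : (G₁ × G₂ × G₃) ≃* (G₁ × G₂ × G₃) := Φ₁.prodCongr (Φ₂.prodCongr Φ₃)
  obtain rfl : M₂ = (M₁.map ψ.toMonoidHom).map (MulAut.conj (h₁, h₂, h₃)).toMonoidHom :=
    Subgroup.eq_map_conj_of_image_mul_mul hrel
  have hproj₁ : M₁.map (MonoidHom.fst _ _) = ⊤ := eq_top_iff.2 fun g _ =>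
    let ⟨_, hg⟩ := hM₁f₁₂ g 1; ⟨_, hg, rfl⟩
  have hproj₂ : M₁.map ((MonoidHom.fst _ _).comp (MonoidHom.snd _ _)) = ⊤ :=
    eq_top_iff.2 fun g _ => let ⟨_, hg⟩ := hM₁f₁₂ 1 g; ⟨_, hg, rfl⟩
  have hproj₃ : M₁.map ((MonoidHom.snd _ _).comp (MonoidHom.snd _ _)) = ⊤ :=
    eq_top_iff.2 fun g _ => let ⟨_, hg⟩ := hM₁f₂₃ 1 g; ⟨_, hg, rfl⟩
  refine ⟨?_, ?_, ?_⟩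
  · exact congrArg SetLike.coe (MonoidHom.conjEquivariant_inl.comap_map_conj_map_equiv hproj₁
      (ψ := ψ) (φ := Φ₁) (fun _ => by ext <;> simp [ψ, MulEquiv.prodCongr]) _).symm
  · exact congrArg SetLike.coe
      ((MonoidHom.conjEquivariant_inr.comp MonoidHom.conjEquivariant_inl).comap_map_conj_map_equiv
        hproj₂ (ψ := ψ) (φ := Φ₂) (fun _ => by ext <;> simp [ψ, MulEquiv.prodCongr]) _).symm
  · exact congrArg SetLike.coe
      ((MonoidHom.conjEquivariant_inr.comp MonoidHom.conjEquivariant_inr).comap_map_conj_map_equiv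
        hproj₃ (ψ := ψ) (φ := Φ₃) (fun _ => by ext <;> simp [ψ, MulEquiv.prodCongr]) _).symm

/-- **Lemma (deconstructing a relation between two group correspondences).**
Let `G₁, G₂, G₃` be compact Hausdorff groups, `M₁, M₂ ≤ G₁ × G₂ × G₃` closed subgroups with
full two-dimensional projections, `Φᵢ` topological automorphisms and `hᵢ, kᵢ ∈ Gᵢ` with
`(h₁,h₂,h₃)·(Φ₁×Φ₂×Φ₃)(M₁)·(k₁,k₂,k₃) = M₂`.  Then `Φᵢ` carries the `i`-th one-dimensional
slice of `M₁` onto that of `M₂`. -/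
theorem slices_respected_by_translated_automorphism_image
    {G₁ G₂ G₃ : Type}
    [Group G₁] [TopologicalSpace G₁] [IsTopologicalGroup G₁] [CompactSpace G₁] [T2Space G₁]
    [Group G₂] [TopologicalSpace G₂] [IsTopologicalGroup G₂] [CompactSpace G₂] [T2Space G₂]
    [Group G₃] [TopologicalSpace G₃] [IsTopologicalGroup G₃] [CompactSpace G₃] [T2Space G₃]
    (M₁ M₂ : Subgroup (G₁ × G₂ × G₃))
    (hM₁closed : IsClosed (M₁ : Set (G₁ × G₂ × G₃)))
    (hM₂closed : IsClosed (M₂ : Set (G₁ × G₂ × G₃)))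
    (hM₁f₁₂ : ∀ (g₁ : G₁) (g₂ : G₂), ∃ g₃ : G₃, (g₁, g₂, g₃) ∈ M₁)
    (hM₁f₁₃ : ∀ (g₁ : G₁) (g₃ : G₃), ∃ g₂ : G₂, (g₁, g₂, g₃) ∈ M₁)
    (hM₁f₂₃ : ∀ (g₂ : G₂) (g₃ : G₃), ∃ g₁ : G₁, (g₁, g₂, g₃) ∈ M₁)
    (hM₂f₁₂ : ∀ (g₁ : G₁) (g₂ : G₂), ∃ g₃ : G₃, (g₁, g₂, g₃) ∈ M₂)
    (hM₂f₁₃ : ∀ (g₁ : G₁) (g₃ : G₃), ∃ g₂ : G₂, (g₁, g₂, g₃) ∈ M₂)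
    (hM₂f₂₃ : ∀ (g₂ : G₂) (g₃ : G₃), ∃ g₁ : G₁, (g₁, g₂, g₃) ∈ M₂)
    (Φ₁ : G₁ ≃* G₁) (Φ₂ : G₂ ≃* G₂) (Φ₃ : G₃ ≃* G₃)
    (hΦ₁ : Continuous Φ₁) (hΦ₁' : Continuous Φ₁.symm)
    (hΦ₂ : Continuous Φ₂) (hΦ₂' : Continuous Φ₂.symm)
    (hΦ₃ : Continuous Φ₃) (hΦ₃' : Continuous Φ₃.symm)
    (h₁ k₁ : G₁) (h₂ k₂ : G₂) (h₃ k₃ : G₃)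
    (hrel :
      (fun p : G₁ × G₂ × G₃ => (h₁, h₂, h₃) * p * (k₁, k₂, k₃)) ''
          ((fun p : G₁ × G₂ × G₃ => (Φ₁ p.1, Φ₂ p.2.1, Φ₃ p.2.2)) '' (M₁ : Set (G₁ × G₂ × G₃)))
        = (M₂ : Set (G₁ × G₂ × G₃))) :
    Φ₁ '' {g : G₁ | (g, 1, 1) ∈ M₁} = {g : G₁ | (g, 1, 1) ∈ M₂} ∧
      Φ₂ '' {g : G₂ | (1, g, 1) ∈ M₁} = {g : G₂ | (1, g, 1) ∈ M₂} ∧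
      Φ₃ '' {g : G₃ | (1, 1, g) ∈ M₁} = {g : G₃ | (1, 1, g) ∈ M₂} :=
  slices_respected_by_translated_automorphism_image_general M₁ M₂ hM₁f₁₂ hM₁f₂₃ Φ₁ Φ₂ Φ₃ h₁ k₁ h₂ k₂
    h₃ k₃ hrel
end

section
/- Let A be a compact abelian group and for i = 1,2 let Θ_{i,1}, Θ_{i,2}, Θ_{i,3} be topological group automorphisms of A, and set M_i := {(a₁,a₂,a₃) ∈ A³ : Θ_{i,1}(a₁)·Θ_{i,2}(a₂)·Θ_{i,3}(a₃) = 1_A} (these subgroups have full two-dimensional projections and trivial one-dimensional slices). Suppose Φ₁, Φ₂, Φ₃ are topological group automorphisms of A and (b₁,b₂,b₃) ∈ A³ satisfy (b₁,b₂,b₃)·(Φ₁×Φ₂×Φ₃)(M₁) = M₂. Then Θ_{1,1}∘Φ₁^{-1}∘Θ_{2,1}^{-1} = Θ_{1,2}∘Φ₂^{-1}∘Θ_{2,2}^{-1} = Θ_{1,3}∘Φ₃^{-1}∘Θ_{2,3}^{-1} as automorphisms of A. -/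
/-!
The translate `b · Φ(M₁)` of a kernel can only be the kernel `M₂` if `b ∈ M₂`; then `Φ` maps
`M₁` onto `M₂`, so `M₁` is also the kernel of `a ↦ ∏ᵢ Θ₂ᵢ(Φᵢ aᵢ)`. Writing `ψᵢ := Θ₂ᵢ ∘ Φᵢ`, the
triple `(ψ₁⁻¹ c, (ψ₂⁻¹ c)⁻¹, 1)` lies in this kernel, hence in `M₁`, which says exactly
`Θ₁₁ (ψ₁⁻¹ c) = Θ₁₂ (ψ₂⁻¹ c)`; likewise for the second and third coordinates.
-/

open Function

namespace MonoidHom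

section TwistedProd

variable {A₁ A₂ A₃ B : Type*} [MulOneClass A₁] [MulOneClass A₂] [MulOneClass A₃] [CommMonoid B]

def twistedProd (θ₁ : A₁ →* B) (θ₂ : A₂ →* B) (θ₃ : A₃ →* B) : A₁ × A₂ × A₃ →* B where
  toFun p := θ₁ p.1 * θ₂ p.2.1 * θ₃ p.2.2
  map_one' := by simp
  map_mul' p q := by simp only [Prod.fst_mul, Prod.snd_mul, map_mul]; ac_rfl

@[simp]
theorem twistedProd_apply (θ₁ : A₁ →* B) (θ₂ : A₂ →* B) (θ₃ : A₃ →* B) (p : A₁ × A₂ × A₃) :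
    twistedProd θ₁ θ₂ θ₃ p = θ₁ p.1 * θ₂ p.2.1 * θ₃ p.2.2 :=
  rfl

end TwistedProd

theorem eq_one_iff_of_translate_image_eq {G H K₁ K₂ : Type*} [MulOneClass G] [Group H]
    [MulOneClass K₁] [MulOneClass K₂] {χ₁ : G →* K₁} {χ₂ : H →* K₂} {φ : G →* H}
    (hφ : Injective φ) {b : H}
    (h : (fun x => b * φ x) '' {x | χ₁ x = 1} = {y | χ₂ y = 1}) (x : G) :
    χ₁ x = 1 ↔ χ₂ (φ x) = 1 := by
  have hmem (x : G) : χ₁ x = 1 ↔ χ₂ (b * φ x) = 1 :=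
    ((mul_right_injective b).comp hφ).mem_set_image.symm.trans (Set.ext_iff.1 h _)
  have hb : χ₂ b = 1 := by simpa using (hmem 1).1 χ₁.map_one
  rw [hmem, map_mul, hb, one_mul]

theorem apply_symm_eq_of_twistedProd_eq_one {A₁ A₂ A₃ B C : Type*} [Group A₁] [Group A₂]
    [Group A₃] [CommGroup B] [CommGroup C] (α₁ : A₁ →* B) (α₂ : A₂ →* B) (α₃ : A₃ →* B)
    (ψ₁ : A₁ ≃* C) (ψ₂ : A₂ ≃* C) (ψ₃ : A₃ ≃* C)
    (h : ∀ p, twistedProd ψ₁.toMonoidHom ψ₂.toMonoidHom ψ₃.toMonoidHom p = 1 →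
      twistedProd α₁ α₂ α₃ p = 1)
    (c : C) : α₁ (ψ₁.symm c) = α₂ (ψ₂.symm c) ∧ α₂ (ψ₂.symm c) = α₃ (ψ₃.symm c) := by
  have h₁₂ := h (ψ₁.symm c, (ψ₂.symm c)⁻¹, 1) (by simp)
  have h₂₃ := h (1, ψ₂.symm c, (ψ₃.symm c)⁻¹) (by simp)
  simp only [twistedProd_apply, map_inv, map_one, mul_one, one_mul] at h₁₂ h₂₃
  exact ⟨mul_inv_eq_one.1 h₁₂, mul_inv_eq_one.1 h₂₃⟩

end MonoidHom

theorem equal_translated_twisted_zero_sum_groups_to_equal_isos_general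
    {A : Type} [CommGroup A]
    (Θ₁₁ Θ₁₂ Θ₁₃ Θ₂₁ Θ₂₂ Θ₂₃ : A ≃* A)
    (Φ₁ Φ₂ Φ₃ : A ≃* A)
    (b₁ b₂ b₃ : A)
    (hrel :
      (fun p : A × A × A => (b₁, b₂, b₃) * p) ''
          ((fun p : A × A × A => (Φ₁ p.1, Φ₂ p.2.1, Φ₃ p.2.2)) ''
            {p : A × A × A | Θ₁₁ p.1 * Θ₁₂ p.2.1 * Θ₁₃ p.2.2 = 1})
        = {p : A × A × A | Θ₂₁ p.1 * Θ₂₂ p.2.1 * Θ₂₃ p.2.2 = 1}) :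
    (∀ a : A, Θ₁₁ (Φ₁.symm (Θ₂₁.symm a)) = Θ₁₂ (Φ₂.symm (Θ₂₂.symm a))) ∧
      ∀ a : A, Θ₁₂ (Φ₂.symm (Θ₂₂.symm a)) = Θ₁₃ (Φ₃.symm (Θ₂₃.symm a)) := by
  let Φ : A × A × A ≃* A × A × A := Φ₁.prodCongr (Φ₂.prodCongr Φ₃)
  rw [Set.image_image] at hrel
  have hker := MonoidHom.eq_one_iff_of_translate_image_eq (φ := Φ.toMonoidHom)
    (χ₁ := MonoidHom.twistedProd Θ₁₁.toMonoidHom Θ₁₂.toMonoidHom Θ₁₃.toMonoidHom)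
    (χ₂ := MonoidHom.twistedProd Θ₂₁.toMonoidHom Θ₂₂.toMonoidHom Θ₂₃.toMonoidHom)
    Φ.injective hrel
  have hiso := MonoidHom.apply_symm_eq_of_twistedProd_eq_one
    Θ₁₁.toMonoidHom Θ₁₂.toMonoidHom Θ₁₃.toMonoidHom
    (Φ₁.trans Θ₂₁) (Φ₂.trans Θ₂₂) (Φ₃.trans Θ₂₃) fun p => (hker p).2
  exact ⟨fun a => (hiso a).1, fun a => (hiso a).2⟩

/-- **Lemma (equal twisted Mackey groups give equal twisting isomorphisms).**
Let `A` be a compact abelian group, `Θᵢⱼ` topological automorphisms of `A`, and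
`Mᵢ = {(a₁,a₂,a₃) ∈ A³ | Θᵢ₁(a₁)Θᵢ₂(a₂)Θᵢ₃(a₃) = 1}`.  If automorphisms `Φ₁, Φ₂, Φ₃` and
`(b₁,b₂,b₃) ∈ A³` satisfy `(b₁,b₂,b₃)·(Φ₁×Φ₂×Φ₃)(M₁) = M₂`, then
`Θ₁₁∘Φ₁⁻¹∘Θ₂₁⁻¹ = Θ₁₂∘Φ₂⁻¹∘Θ₂₂⁻¹ = Θ₁₃∘Φ₃⁻¹∘Θ₂₃⁻¹`. -/
theorem equal_translated_twisted_zero_sum_groups_to_equal_isos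
    {A : Type} [CommGroup A] [TopologicalSpace A] [IsTopologicalGroup A]
    [CompactSpace A] [T2Space A]
    (Θ₁₁ Θ₁₂ Θ₁₃ Θ₂₁ Θ₂₂ Θ₂₃ : A ≃* A)
    (hΘ₁₁ : Continuous Θ₁₁) (hΘ₁₁' : Continuous Θ₁₁.symm)
    (hΘ₁₂ : Continuous Θ₁₂) (hΘ₁₂' : Continuous Θ₁₂.symm)
    (hΘ₁₃ : Continuous Θ₁₃) (hΘ₁₃' : Continuous Θ₁₃.symm)
    (hΘ₂₁ : Continuous Θ₂₁) (hΘ₂₁' : Continuous Θ₂₁.symm)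
    (hΘ₂₂ : Continuous Θ₂₂) (hΘ₂₂' : Continuous Θ₂₂.symm)
    (hΘ₂₃ : Continuous Θ₂₃) (hΘ₂₃' : Continuous Θ₂₃.symm)
    (Φ₁ Φ₂ Φ₃ : A ≃* A)
    (hΦ₁ : Continuous Φ₁) (hΦ₁' : Continuous Φ₁.symm)
    (hΦ₂ : Continuous Φ₂) (hΦ₂' : Continuous Φ₂.symm)
    (hΦ₃ : Continuous Φ₃) (hΦ₃' : Continuous Φ₃.symm)
    (b₁ b₂ b₃ : A)
    (hrel :
      (fun p : A × A × A => (b₁, b₂, b₃) * p) ''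
          ((fun p : A × A × A => (Φ₁ p.1, Φ₂ p.2.1, Φ₃ p.2.2)) ''
            {p : A × A × A | Θ₁₁ p.1 * Θ₁₂ p.2.1 * Θ₁₃ p.2.2 = 1})
        = {p : A × A × A | Θ₂₁ p.1 * Θ₂₂ p.2.1 * Θ₂₃ p.2.2 = 1}) :
    (∀ a : A, Θ₁₁ (Φ₁.symm (Θ₂₁.symm a)) = Θ₁₂ (Φ₂.symm (Θ₂₂.symm a))) ∧
      ∀ a : A, Θ₁₂ (Φ₂.symm (Θ₂₂.symm a)) = Θ₁₃ (Φ₃.symm (Θ₂₃.symm a)) :=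
  equal_translated_twisted_zero_sum_groups_to_equal_isos_general Θ₁₁ Θ₁₂ Θ₁₃ Θ₂₁ Θ₂₂ Θ₂₃ Φ₁ Φ₂ Φ₃ b₁
    b₂ b₃ hrel
end

section
/- Let A be a compact abelian group and for i = 1,2 let Θ_{i,1}, Θ_{i,2}, Θ_{i,3} be topological group automorphisms of A, and set M_i := {(a₁,a₂,a₃) ∈ A³ : Θ_{i,1}(a₁)·Θ_{i,2}(a₂)·Θ_{i,3}(a₃) = 1_A}. Then M₁ = M₂ if and only if Θ_{1,1}∘Θ_{2,1}^{-1} = Θ_{1,2}∘Θ_{2,2}^{-1} = Θ_{1,3}∘Θ_{2,3}^{-1} as automorphisms of A. -/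
open Function

/-!
Substituting `aⱼ = Θ₂ⱼ⁻¹ bⱼ` identifies `M₂` with the plain zero-sum subgroup `b₁b₂b₃ = 1` and
`M₁` with the zero-sum set twisted by `fⱼ = Θ₁ⱼ ∘ Θ₂ⱼ⁻¹`. That set is the plain one exactly when
all `fⱼ` agree: testing with `(b, b⁻¹, 1)` and `(1, b, b⁻¹)` forces `f₁ = f₂ = f₃`, and conversely a
common injective `f` satisfies `f(b₁b₂b₃) = 1 ↔ b₁b₂b₃ = 1`.
-/

def twistedZeroSumSet {A B : Type*} [MulOneClass A] [Monoid B] (f₁ f₂ f₃ : A →* B) :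
    Set (A × A × A) :=
  {p | f₁ p.1 * f₂ p.2.1 * f₃ p.2.2 = 1}

theorem twistedZeroSumSet_eq_twistedZeroSumSet_id_iff {A B : Type*} [Group A] [Group B]
    (f₁ f₂ f₃ : A →* B) (hf₁ : Injective f₁) :
    twistedZeroSumSet f₁ f₂ f₃ = twistedZeroSumSet (.id A) (.id A) (.id A)
      ↔ f₁ = f₂ ∧ f₂ = f₃ := by
  constructor
  · intro h
    have mem_iff (p : A × A × A) := Set.ext_iff.mp h p
    constructor
    · ext b
      have := (mem_iff (b, b⁻¹, 1)).mpr (by simp [twistedZeroSumSet])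
      simpa [twistedZeroSumSet, mul_inv_eq_one] using this
    · ext b
      have := (mem_iff (1, b, b⁻¹)).mpr (by simp [twistedZeroSumSet])
      simpa [twistedZeroSumSet, mul_inv_eq_one] using this
  · rintro ⟨rfl, rfl⟩
    ext p
    simp only [twistedZeroSumSet, Set.mem_ofPred_eq, ← map_mul, MonoidHom.id_apply]
    exact map_eq_one_iff f₁ hf₁

theorem twisted_zero_sum_groups_equal_iff_general
    {A : Type} [CommGroup A]
    (Θ₁₁ Θ₁₂ Θ₁₃ Θ₂₁ Θ₂₂ Θ₂₃ : A ≃* A) :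
    ({p : A × A × A | Θ₁₁ p.1 * Θ₁₂ p.2.1 * Θ₁₃ p.2.2 = 1}
        = {p : A × A × A | Θ₂₁ p.1 * Θ₂₂ p.2.1 * Θ₂₃ p.2.2 = 1})
      ↔ ((∀ a : A, Θ₁₁ (Θ₂₁.symm a) = Θ₁₂ (Θ₂₂.symm a)) ∧
          ∀ a : A, Θ₁₂ (Θ₂₂.symm a) = Θ₁₃ (Θ₂₃.symm a)) := by
  set f₁ := (Θ₂₁.symm.trans Θ₁₁).toMonoidHom
  set f₂ := (Θ₂₂.symm.trans Θ₁₂).toMonoidHom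
  set f₃ := (Θ₂₃.symm.trans Θ₁₃).toMonoidHom
  set e := Prod.map Θ₂₁ (Prod.map Θ₂₂ Θ₂₃)
  have hM₁ : {p : A × A × A | Θ₁₁ p.1 * Θ₁₂ p.2.1 * Θ₁₃ p.2.2 = 1}
      = e ⁻¹' twistedZeroSumSet f₁ f₂ f₃ := by
    ext p; simp [e, f₁, f₂, f₃, twistedZeroSumSet]
  have hM₂ : {p : A × A × A | Θ₂₁ p.1 * Θ₂₂ p.2.1 * Θ₂₃ p.2.2 = 1}
      = e ⁻¹' twistedZeroSumSet (.id A) (.id A) (.id A) := rfl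
  have he : Surjective e :=
    Θ₂₁.surjective.prodMap (Θ₂₂.surjective.prodMap Θ₂₃.surjective)
  rw [hM₁, hM₂, (Set.preimage_injective.mpr he).eq_iff,
    twistedZeroSumSet_eq_twistedZeroSumSet_id_iff f₁ f₂ f₃ (Θ₂₁.symm.trans Θ₁₁).injective]
  simp only [MonoidHom.ext_iff, f₁, f₂, f₃]
  rfl

/-- **Lemma (when the twisted zero-sum subgroups are equal).**
Let `A` be a compact abelian group, `Θᵢⱼ` topological automorphisms of `A`, and
`Mᵢ = {(a₁,a₂,a₃) ∈ A³ | Θᵢ₁(a₁)Θᵢ₂(a₂)Θᵢ₃(a₃) = 1}`.  Then `M₁ = M₂` if and only if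
`Θ₁₁∘Θ₂₁⁻¹ = Θ₁₂∘Θ₂₂⁻¹ = Θ₁₃∘Θ₂₃⁻¹`. -/
theorem twisted_zero_sum_groups_equal_iff
    {A : Type} [CommGroup A] [TopologicalSpace A] [IsTopologicalGroup A]
    [CompactSpace A] [T2Space A]
    (Θ₁₁ Θ₁₂ Θ₁₃ Θ₂₁ Θ₂₂ Θ₂₃ : A ≃* A)
    (hΘ₁₁ : Continuous Θ₁₁) (hΘ₁₁' : Continuous Θ₁₁.symm)
    (hΘ₁₂ : Continuous Θ₁₂) (hΘ₁₂' : Continuous Θ₁₂.symm)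
    (hΘ₁₃ : Continuous Θ₁₃) (hΘ₁₃' : Continuous Θ₁₃.symm)
    (hΘ₂₁ : Continuous Θ₂₁) (hΘ₂₁' : Continuous Θ₂₁.symm)
    (hΘ₂₂ : Continuous Θ₂₂) (hΘ₂₂' : Continuous Θ₂₂.symm)
    (hΘ₂₃ : Continuous Θ₂₃) (hΘ₂₃' : Continuous Θ₂₃.symm) :
    ({p : A × A × A | Θ₁₁ p.1 * Θ₁₂ p.2.1 * Θ₁₃ p.2.2 = 1}
        = {p : A × A × A | Θ₂₁ p.1 * Θ₂₂ p.2.1 * Θ₂₃ p.2.2 = 1})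
      ↔ ((∀ a : A, Θ₁₁ (Θ₂₁.symm a) = Θ₁₂ (Θ₂₂.symm a)) ∧
          ∀ a : A, Θ₁₂ (Θ₂₂.symm a) = Θ₁₃ (Θ₂₃.symm a)) :=
  twisted_zero_sum_groups_equal_iff_general Θ₁₁ Θ₁₂ Θ₁₃ Θ₂₁ Θ₂₂ Θ₂₃
end

section
/- Let Z be a compact Hausdorff abelian group, φ : ℤ² → Z a group homomorphism, and p₁, p₂, p₃ ∈ ℤ². For i ≠ j set K_{ij} := the closure of φ(ℤ(p_i − p_j)) in Z, and define Z⃗ := {(z₁,z₂,z₃) ∈ Z³ : z_i·K_{ij} = z_j·K_{ij} for all i ≠ j}. Then for every u ∈ K_{13} there exists u₂ ∈ Z such that (u, u₂, 1_Z) ∈ Z⃗. -/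
/-!
Since `p₁ - p₃ = (p₁ - p₂) + (p₂ - p₃)`, the group `K₁₃` is the closure of a subgroup of
`K₁₂ · K₂₃`, and this product of compact sets is closed; so `u = a * b` with `a ∈ K₁₂`,
`b ∈ K₂₃`, and `u₂ := b` lies in the required cosets.
-/

open scoped Pointwise

/-- The closure of the `φ`-image of the cyclic subgroup of `ℤ²` generated by `d`. -/
def orbitClosure {Z : Type} [CommGroup Z] [TopologicalSpace Z]
    (φ : ℤ × ℤ → Z) (d : ℤ × ℤ) : Set Z :=
  closure (Set.range fun n : ℤ => φ (n • d))

theorem Subgroup.topologicalClosure_sup_le {G : Type*} [CommGroup G] [TopologicalSpace G]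
    [IsTopologicalGroup G] [CompactSpace G] [T2Space G] (H K : Subgroup G) :
    (H ⊔ K).topologicalClosure ≤ H.topologicalClosure ⊔ K.topologicalClosure := by
  refine (H ⊔ K).topologicalClosure_minimal
    (sup_le_sup H.le_topologicalClosure K.le_topologicalClosure) ?_
  rw [Subgroup.mul_normal]
  exact (H.isClosed_topologicalClosure.isCompact.mul
    K.isClosed_topologicalClosure.isCompact).isClosed

theorem map_zsmul_of_map_add {A G : Type*} [AddGroup A] [Group G] {φ : A → G}
    (hφ : ∀ a b, φ (a + b) = φ a * φ b) (n : ℤ) (d : A) : φ (n • d) = φ d ^ n :=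
  map_zsmul (AddMonoidHom.mk' (fun a => Additive.ofMul (φ a)) hφ) n d

theorem orbitClosure_eq_topologicalClosure_zpowers {Z : Type} [CommGroup Z] [TopologicalSpace Z]
    [IsTopologicalGroup Z] {φ : ℤ × ℤ → Z} (hφ : ∀ a b, φ (a + b) = φ a * φ b) (d : ℤ × ℤ) :
    orbitClosure φ d = (Subgroup.zpowers (φ d)).topologicalClosure := by
  simp only [orbitClosure, Subgroup.topologicalClosure_coe, Subgroup.coe_zpowers,
    map_zsmul_of_map_add hφ]

/-- **Lemma (lifting an element of `K₁₃` into the Furstenberg subgroup).**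
Let `Z` be a compact Hausdorff abelian group, `φ : ℤ² → Z` a homomorphism, and
`p₁, p₂, p₃ ∈ ℤ²`.  With `K_{ij}` the closure of `φ(ℤ(pᵢ − pⱼ))` and
`Z⃗ = {(z₁,z₂,z₃) : zᵢK_{ij} = zⱼK_{ij} ∀ i ≠ j}`, every `u ∈ K₁₃` admits `u₂ ∈ Z` with
`(u, u₂, 1) ∈ Z⃗`. -/
theorem lift_into_Furstenberg_subgroup
    {Z : Type} [CommGroup Z] [TopologicalSpace Z] [IsTopologicalGroup Z]
    [CompactSpace Z] [T2Space Z]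
    (φ : ℤ × ℤ → Z) (hφ : ∀ a b : ℤ × ℤ, φ (a + b) = φ a * φ b)
    (p₁ p₂ p₃ : ℤ × ℤ) :
    ∀ u ∈ orbitClosure φ (p₁ - p₃), ∃ u₂ : Z,
      u • orbitClosure φ (p₁ - p₂) = u₂ • orbitClosure φ (p₁ - p₂) ∧
      u • orbitClosure φ (p₁ - p₃) = (1 : Z) • orbitClosure φ (p₁ - p₃) ∧
      u₂ • orbitClosure φ (p₂ - p₃) = (1 : Z) • orbitClosure φ (p₂ - p₃) := by
  intro u hu
  simp only [orbitClosure_eq_topologicalClosure_zpowers hφ, leftCoset_eq_iff] at hu ⊢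
  have hsplit : φ (p₁ - p₃) = φ (p₁ - p₂) * φ (p₂ - p₃) := by rw [← hφ, sub_add_sub_cancel]
  have hle : Subgroup.zpowers (φ (p₁ - p₃)) ≤
      Subgroup.zpowers (φ (p₁ - p₂)) ⊔ Subgroup.zpowers (φ (p₂ - p₃)) := by
    rw [Subgroup.zpowers_le, hsplit]
    exact Subgroup.mul_mem_sup (Subgroup.mem_zpowers _) (Subgroup.mem_zpowers _)
  obtain ⟨a, ha, b, hb, rfl⟩ := Subgroup.mem_sup.mp <|
    Subgroup.topologicalClosure_sup_le _ _ (Subgroup.topologicalClosure_mono hle hu)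
  refine ⟨b, ?_, ?_, ?_⟩
  · simpa [mul_comm a] using inv_mem ha
  · simpa using inv_mem hu
  · simpa using inv_mem hb
end

section
/- Let Z be a compact Hausdorff abelian group and φ : ℤ² → Z a homomorphism with the DIO property, and let n₁, n₂ ∈ ℤ² be linearly independent. Let K_i denote the closure of φ(ℤn_i) in Z and q : Z → Z/K₂ the quotient homomorphism. Then q restricts to a topological group isomorphism from K₁ onto the subgroup (K₁·K₂)/K₂ of Z/K₂; consequently q maps each coset z·K₁ of K₁ in Z bijectively onto the corresponding coset of (K₁·K₂)/K₂ in Z/K₂, so that the factor map q from the rotation system (Z, Haar, R_{φ(n₁)}) to the quotient rotation system (Z/K₂, Haar, R_{q(φ(n₁))}) is a relatively invariant extension (it maps each ergodic component of R_{φ(n₁)}, namely each coset of K₁, isomorphically onto its image). -/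
/-! `q` is injective on `K₁` because its kernel `K₂` meets `K₁` trivially, which is exactly what
the DIO property gives for the independent cyclic groups `ℤn₁` and `ℤn₂`. A continuous bijection
from the compact group `K₁` onto a subgroup of `Z/K₂`, which is Hausdorff
as `K₂` is closed, is a homeomorphism. -/

/-- The closed subgroup generated by the `φ`-orbit of direction `n`:
the topological closure of `φ(ℤn)`. -/
def dirClosure {Z : Type} [AddCommGroup Z] [TopologicalSpace Z] [IsTopologicalAddGroup Z]
    (φ : (ℤ × ℤ) →+ Z) (n : ℤ × ℤ) : AddSubgroup Z :=
  ((AddSubgroup.zmultiples n).map φ).topologicalClosure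

theorem AddSubgroup.zmultiples_inf_zmultiples_eq_bot {M : Type*} [AddCommGroup M] {n₁ n₂ : M}
    (hindep : ∀ a b : ℤ, a • n₁ + b • n₂ = 0 → a = 0 ∧ b = 0) :
    zmultiples n₁ ⊓ zmultiples n₂ = ⊥ := by
  rw [eq_bot_iff]
  rintro x ⟨⟨a, rfl⟩, ⟨b, hb : b • n₂ = a • n₁⟩⟩
  have ha : a = 0 := (hindep a (-b) (by rw [neg_smul, hb, add_neg_cancel])).1
  simp [ha]

namespace AddMonoidHom

variable {G G' : Type*} [AddGroup G] [AddGroup G'] (f : G →+ G') {H : AddSubgroup G}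

theorem injOn_of_ker_inf_eq_bot (h : f.ker ⊓ H = ⊥) : Set.InjOn f H := by
  intro a ha b hb hab
  have hmem : a - b ∈ f.ker ⊓ H := ⟨by simp [hab], H.sub_mem ha hb⟩
  rw [h, AddSubgroup.mem_bot] at hmem
  exact sub_eq_zero.mp hmem

theorem injOn_image_add_left_of_ker_inf_eq_bot (h : f.ker ⊓ H = ⊥) (z : G) :
    Set.InjOn f ((z + ·) '' H) := by
  rintro _ ⟨a, ha, rfl⟩ _ ⟨b, hb, rfl⟩ hab
  rw [map_add, map_add, add_right_inj] at hab
  rw [f.injOn_of_ker_inf_eq_bot h ha hb hab]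

theorem bijOn_image_add_left_of_ker_inf_eq_bot (h : f.ker ⊓ H = ⊥) (z : G) :
    Set.BijOn f ((z + ·) '' H) ((f z + ·) '' (f '' H)) := by
  have himage : f '' ((z + ·) '' H) = (f z + ·) '' (f '' H) := by
    simp only [Set.image_image, map_add]
  exact himage ▸ (f.injOn_image_add_left_of_ker_inf_eq_bot h z).bijOn_image

theorem addSubgroupMap_injective_of_ker_inf_eq_bot (h : f.ker ⊓ H = ⊥) :
    Function.Injective (f.addSubgroupMap H) := fun a b hab =>
  Subtype.ext <| f.injOn_of_ker_inf_eq_bot h a.2 b.2 (congrArg Subtype.val hab)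

noncomputable def addSubgroupMapEquivOfKerInfEqBot (h : f.ker ⊓ H = ⊥) : H ≃+ H.map f :=
  AddEquiv.ofBijective (f.addSubgroupMap H)
    ⟨f.addSubgroupMap_injective_of_ker_inf_eq_bot h, f.addSubgroupMap_surjective H⟩

variable [TopologicalSpace G] [TopologicalSpace G']

theorem continuous_addSubgroupMapEquivOfKerInfEqBot (hf : Continuous f) (h : f.ker ⊓ H = ⊥) :
    Continuous (f.addSubgroupMapEquivOfKerInfEqBot h) :=
  (hf.comp continuous_subtype_val).subtype_mk _

theorem continuous_addSubgroupMapEquivOfKerInfEqBot_symm [CompactSpace H] [T2Space G']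
    (hf : Continuous f) (h : f.ker ⊓ H = ⊥) :
    Continuous (f.addSubgroupMapEquivOfKerInfEqBot h).symm :=
  ((f.continuous_addSubgroupMapEquivOfKerInfEqBot hf h).homeoOfEquivCompactToT2
    (f := (f.addSubgroupMapEquivOfKerInfEqBot h).toEquiv)).symm.continuous

end AddMonoidHom

theorem DIO_quotient_relatively_invariant_general
    {Z : Type} [AddCommGroup Z] [TopologicalSpace Z] [IsTopologicalAddGroup Z]
    [CompactSpace Z]
    (φ : (ℤ × ℤ) →+ Z)
    (hDIO : ∀ Γ₁ Γ₂ : AddSubgroup (ℤ × ℤ), Γ₁ ⊓ Γ₂ = ⊥ →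
      (Γ₁.map φ).topologicalClosure ⊓ (Γ₂.map φ).topologicalClosure = ⊥)
    (n₁ n₂ : ℤ × ℤ)
    (hindep : ∀ a b : ℤ, a • n₁ + b • n₂ = 0 → a = 0 ∧ b = 0) :
    (∃ e : ↥(dirClosure φ n₁) ≃+
        ↥(AddSubgroup.map (QuotientAddGroup.mk' (dirClosure φ n₂)) (dirClosure φ n₁)),
      Continuous e ∧ Continuous e.symm ∧
        ∀ k : ↥(dirClosure φ n₁),
          (e k : Z ⧸ dirClosure φ n₂) = QuotientAddGroup.mk' (dirClosure φ n₂) ↑k) ∧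
    ∀ z : Z, Set.BijOn (QuotientAddGroup.mk' (dirClosure φ n₂))
        ((fun k => z + k) '' (dirClosure φ n₁ : Set Z))
        ((fun w => QuotientAddGroup.mk' (dirClosure φ n₂) z + w) ''
          (QuotientAddGroup.mk' (dirClosure φ n₂) '' (dirClosure φ n₁ : Set Z))) := by
  set K₁ := dirClosure φ n₁
  set K₂ := dirClosure φ n₂
  set q := QuotientAddGroup.mk' K₂
  have hker : q.ker ⊓ K₁ = ⊥ := by
    rw [QuotientAddGroup.ker_mk', inf_comm]
    exact hDIO _ _ (AddSubgroup.zmultiples_inf_zmultiples_eq_bot hindep)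
  have : IsClosed (K₂ : Set Z) := AddSubgroup.isClosed_topologicalClosure _
  have : CompactSpace K₁ :=
    isCompact_iff_compactSpace.mp (AddSubgroup.isClosed_topologicalClosure _).isCompact
  have hq : Continuous q := continuous_quot_mk
  exact ⟨⟨q.addSubgroupMapEquivOfKerInfEqBot hker,
      q.continuous_addSubgroupMapEquivOfKerInfEqBot hq hker,
      q.continuous_addSubgroupMapEquivOfKerInfEqBot_symm hq hker, fun _ => rfl⟩,
    q.bijOn_image_add_left_of_ker_inf_eq_bot hker⟩

/-- **Corollary (DIO gives relatively invariant quotient extensions).**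
Let `Z` be a compact Hausdorff abelian group and `φ : ℤ² → Z` a homomorphism with the DIO
property, and let `n₁, n₂ ∈ ℤ²` be linearly independent.  With `Kᵢ` the closure of `φ(ℤnᵢ)`
and `q : Z → Z/K₂` the quotient map, `q` restricts to a topological group isomorphism of
`K₁` onto `(K₁·K₂)/K₂`, and maps every coset `z + K₁` bijectively onto its image coset. -/
theorem DIO_quotient_relatively_invariant
    {Z : Type} [AddCommGroup Z] [TopologicalSpace Z] [IsTopologicalAddGroup Z]
    [CompactSpace Z] [T2Space Z]
    (φ : (ℤ × ℤ) →+ Z)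
    (hDIO : ∀ Γ₁ Γ₂ : AddSubgroup (ℤ × ℤ), Γ₁ ⊓ Γ₂ = ⊥ →
      (Γ₁.map φ).topologicalClosure ⊓ (Γ₂.map φ).topologicalClosure = ⊥)
    (n₁ n₂ : ℤ × ℤ)
    (hindep : ∀ a b : ℤ, a • n₁ + b • n₂ = 0 → a = 0 ∧ b = 0) :
    (∃ e : ↥(dirClosure φ n₁) ≃+
        ↥(AddSubgroup.map (QuotientAddGroup.mk' (dirClosure φ n₂)) (dirClosure φ n₁)),
      Continuous e ∧ Continuous e.symm ∧
        ∀ k : ↥(dirClosure φ n₁),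
          (e k : Z ⧸ dirClosure φ n₂) = QuotientAddGroup.mk' (dirClosure φ n₂) ↑k) ∧
    ∀ z : Z, Set.BijOn (QuotientAddGroup.mk' (dirClosure φ n₂))
        ((fun k => z + k) '' (dirClosure φ n₁ : Set Z))
        ((fun w => QuotientAddGroup.mk' (dirClosure φ n₂) z + w) ''
          (QuotientAddGroup.mk' (dirClosure φ n₂) '' (dirClosure φ n₁ : Set Z))) :=
  DIO_quotient_relatively_invariant_general φ hDIO n₁ n₂ hindep
end

section
/- Let (X,μ) be a standard Borel probability space, let (B_n)_{n≥1} be a sequence of sub-σ-algebras of the Borel σ-algebra of X, and let C_n ⊆ B_n be further sub-σ-algebras. Assume that for all n ≠ m the pair (B_n, B_m) is relatively independent over (C_n, C_m), in the sense that ∫_X f·g dμ = ∫_X E_μ(f|C_n)·E_μ(g|C_m) dμ for all bounded B_n-measurable f and bounded B_m-measurable g. If f ∈ L^∞(μ) satisfies limsup_{n→∞} ‖E_μ(f|B_n)‖_{L²(μ)} > 0, then also limsup_{n→∞} ‖E_μ(f|C_n)‖_{L²(μ)} > 0. -/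
/-!
Work in `L²(μ)` with `g n = E(f|B n)` and `c n = E(f|C n)`. Each `g n` is the orthogonal projection
of `f` onto a closed subspace, so `⟪g n, f⟫ = ‖g n‖²`, and relative independence turns the
correlation `⟪g n, g m⟫` (`n ≠ m`) into `⟪c n, c m⟫ ≤ ‖c n‖ ‖c m‖`. If `c n → 0` but `‖g n‖ ≥ ε`
infinitely often, take `N` such indices with `‖c n‖ < δ` and let `S` be the sum of the
corresponding `g n`: then `N ε² ≤ ⟪S, f⟫ ≤ ‖S‖ ‖f‖` while `‖S‖² ≤ N ‖f‖² + N² δ²`, which fails for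
`δ ‖f‖ < ε²` and `N` large. Relative independence is only assumed for everywhere bounded
measurable functions, so it is applied to `g n`, `g m` truncated at the essential bound of `f`.
-/

open MeasureTheory Filter
open scoped ENNReal RealInnerProductSpace Topology

section InnerProductSpace

variable {E : Type*} [NormedAddCommGroup E] [InnerProductSpace ℝ E]

theorem norm_sum_sq_le_of_pairwise_inner_le {ι : Type*} (s : Finset ι) {v : ι → E} {M η : ℝ}
    (hv : ∀ i ∈ s, ‖v i‖ ^ 2 ≤ M) (hvv : (s : Set ι).Pairwise fun i j => ⟪v i, v j⟫ ≤ η) :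
    ‖∑ i ∈ s, v i‖ ^ 2 ≤ s.card * M + (s.card ^ 2 - s.card) * η := by
  classical
  have hrow : ∀ i ∈ s, ∑ j ∈ s, ⟪v i, v j⟫ ≤ M + (s.card - 1) * η := by
    intro i hi
    rw [← Finset.add_sum_erase s _ hi, real_inner_self_eq_norm_sq]
    have hcard : ((s.erase i).card : ℝ) = s.card - 1 := by
      rw [Finset.card_erase_of_mem hi, Nat.cast_pred (Finset.card_pos.2 ⟨i, hi⟩)]
    have hoff : ∑ j ∈ s.erase i, ⟪v i, v j⟫ ≤ ∑ _j ∈ s.erase i, η :=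
      Finset.sum_le_sum fun j hj =>
        hvv hi (Finset.mem_of_mem_erase hj) (Finset.ne_of_mem_erase hj).symm
    rw [Finset.sum_const, nsmul_eq_mul, hcard] at hoff
    linarith [hv i hi]
  calc ‖∑ i ∈ s, v i‖ ^ 2 = ∑ i ∈ s, ∑ j ∈ s, ⟪v i, v j⟫ := by
        rw [← real_inner_self_eq_norm_sq, sum_inner]
        simp only [inner_sum]
    _ ≤ ∑ _i ∈ s, (M + (s.card - 1) * η) := Finset.sum_le_sum hrow
    _ = s.card * M + (s.card ^ 2 - s.card) * η := by
        rw [Finset.sum_const, nsmul_eq_mul]; ring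

/-- Infinitely many almost orthogonal vectors of bounded norm cannot all correlate with `f`. -/
theorem sq_le_norm_sq_mul_of_pairwise_inner_le {v : ℕ → E} {f : E} {a M η : ℝ} (ha : 0 ≤ a)
    (hvf : ∀ i, a ≤ ⟪v i, f⟫) (hv : ∀ i, ‖v i‖ ^ 2 ≤ M)
    (hvv : Pairwise fun i j => ⟪v i, v j⟫ ≤ η) :
    a ^ 2 ≤ ‖f‖ ^ 2 * η := by
  have hpartial : ∀ N : ℕ, (N * a) ^ 2 ≤ ‖f‖ ^ 2 * (N * M + (N ^ 2 - N) * η) := by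
    intro N
    set S := ∑ i ∈ Finset.range N, v i
    have hSf : N * a ≤ ⟪S, f⟫ := by
      simpa [S, sum_inner] using Finset.sum_le_sum fun i (_ : i ∈ Finset.range N) => hvf i
    have hS : ‖S‖ ^ 2 ≤ N * M + (N ^ 2 - N) * η := by
      simpa using norm_sum_sq_le_of_pairwise_inner_le (Finset.range N) (fun i _ => hv i)
        (hvv.set_pairwise _)
    calc (N * a) ^ 2 ≤ (‖S‖ * ‖f‖) ^ 2 :=
          pow_le_pow_left₀ (by positivity) (hSf.trans (real_inner_le_norm S f)) 2
      _ = ‖f‖ ^ 2 * ‖S‖ ^ 2 := by ring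
      _ ≤ ‖f‖ ^ 2 * (N * M + (N ^ 2 - N) * η) := by gcongr
  by_contra! hlt
  have hd : 0 < a ^ 2 - ‖f‖ ^ 2 * η := by linarith
  obtain ⟨N, hN⟩ := exists_nat_gt (‖f‖ ^ 2 * (M - η) / (a ^ 2 - ‖f‖ ^ 2 * η))
  rw [div_lt_iff₀ hd] at hN
  have := hpartial (N + 1)
  push_cast at this
  nlinarith

/-- `hV` says that `V n` is the orthogonal projection of `F` onto some closed subspace. -/
theorem tendsto_zero_of_pairwise_inner_le_norm_mul_norm {F : E} {V W : ℕ → E}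
    (hV : ∀ n, ⟪V n, F⟫ = ‖V n‖ ^ 2) (hVW : Pairwise fun n m => ⟪V n, V m⟫ ≤ ‖W n‖ * ‖W m‖)
    (hW : Tendsto W atTop (𝓝 0)) : Tendsto V atTop (𝓝 0) := by
  rw [tendsto_zero_iff_norm_tendsto_zero] at hW ⊢
  refine tendsto_order.2 ⟨fun a ha => Eventually.of_forall fun n => ha.trans_le (norm_nonneg _),
    fun ε hε => ?_⟩
  by_contra hfreq
  rw [not_eventually] at hfreq
  simp only [not_lt] at hfreq
  have hVF : ∀ n, ‖V n‖ ≤ ‖F‖ := fun n => by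
    have := (hV n).symm.le.trans (real_inner_le_norm (V n) F)
    nlinarith [norm_nonneg (V n), norm_nonneg F]
  set δ := ε ^ 2 / (‖F‖ + 1)
  have hδ : 0 < δ := by positivity
  have hFδ : ‖F‖ * δ < ε ^ 2 := by
    calc ‖F‖ * δ < (‖F‖ + 1) * δ := by gcongr; linarith
      _ = ε ^ 2 := mul_div_cancel₀ _ (by positivity)
  obtain ⟨φ, hφ, hφV⟩ := extraction_of_frequently_atTop
    (hfreq.and_eventually ((tendsto_order.1 hW).2 δ hδ))
  have key := sq_le_norm_sq_mul_of_pairwise_inner_le (v := V ∘ φ) (f := F) (M := ‖F‖ ^ 2)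
    (η := δ ^ 2) (by positivity)
    (fun k => (hV (φ k)).ge.trans' (pow_le_pow_left₀ hε.le (hφV k).1 2))
    (fun k => pow_le_pow_left₀ (norm_nonneg _) (hVF _) 2)
    (fun i j hij => (hVW (hφ.injective.ne hij)).trans
      (by rw [sq]; exact mul_le_mul (hφV i).2.le (hφV j).2.le (norm_nonneg _) hδ.le))
  have := pow_lt_pow_left₀ hFδ (by positivity) two_ne_zero
  rw [mul_pow] at this
  linarith

end InnerProductSpace

section ConditionalExpectation

variable {X : Type*} {m B₁ B₂ C₁ C₂ : MeasurableSpace X} [mX : MeasurableSpace X] {μ : Measure X}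

theorem MeasureTheory.MemLp.inner_toLp_toLp {u w : X → ℝ} (hu : MemLp u 2 μ) (hw : MemLp w 2 μ) :
    ⟪hu.toLp u, hw.toLp w⟫ = ∫ x, u x * w x ∂μ := by
  rw [L2.inner_def]
  refine integral_congr_ae ?_
  filter_upwards [hu.coeFn_toLp, hw.coeFn_toLp] with x hux hwx
  rw [hux, hwx, real_inner_eq_re_inner, RCLike.inner_apply, mul_comm]
  simp

theorem limsup_eLpNorm_eq_zero_iff_tendsto_toLp {ι : Type*} {l : Filter ι} [l.NeBot]
    {E : Type*} [NormedAddCommGroup E] {p : ℝ≥0∞} [Fact (1 ≤ p)] {u : ι → X → E}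
    (hu : ∀ i, MemLp (u i) p μ) :
    l.limsup (fun i => eLpNorm (u i) p μ) = 0 ↔ Tendsto (fun i => (hu i).toLp (u i)) l (𝓝 0) := by
  simp only [tendsto_zero_iff_enorm_tendsto_zero, Lp.enorm_toLp]
  exact ⟨fun h => tendsto_of_le_liminf_of_limsup_le zero_le h.le, Tendsto.limsup_eq⟩

theorem integral_condExp_mul_self [IsFiniteMeasure μ] (hm : m ≤ mX)
    {f : X → ℝ} (hf : MemLp f 2 μ) :
    ∫ x, (μ[f|m]) x * f x ∂μ = ∫ x, (μ[f|m]) x * (μ[f|m]) x ∂μ := by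
  have hpull : μ[μ[f|m] * f|m] =ᵐ[μ] μ[f|m] * μ[f|m] :=
    condExp_mul_of_stronglyMeasurable_left stronglyMeasurable_condExp
      ((hf.condExp one_le_two).integrable_mul hf) (hf.integrable one_le_two)
  rw [← integral_condExp hm]
  exact integral_congr_ae hpull

theorem exists_bounded_measurable_ae_eq {u : X → ℝ} {K : ℝ}
    (hu : Measurable[m] u) (hK : ∀ᵐ x ∂μ, ‖u x‖ ≤ K) :
    ∃ v : X → ℝ, (∃ c : ℝ, ∀ x, |v x| ≤ c) ∧ Measurable[m] v ∧ v =ᵐ[μ] u := by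
  refine ⟨fun x => max (-K) (min K (u x)), ⟨|K|, fun x => abs_le.2 ⟨?_, ?_⟩⟩,
    measurable_const.max (measurable_const.min hu), ?_⟩
  · exact (neg_le_neg (le_abs_self K)).trans (le_max_left _ _)
  · exact max_le (neg_le_abs K) ((min_le_left _ _).trans (le_abs_self K))
  · filter_upwards [hK] with x hx
    rw [Real.norm_eq_abs, abs_le] at hx
    simp only [min_eq_right hx.2, max_eq_right hx.1]

def RelIndepOver (B₁ B₂ C₁ C₂ : MeasurableSpace X) {mX : MeasurableSpace X} (μ : Measure X) :
    Prop :=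
  ∀ f g : X → ℝ, (∃ c : ℝ, ∀ x, |f x| ≤ c) → (∃ c : ℝ, ∀ x, |g x| ≤ c) →
    Measurable[B₁] f → Measurable[B₂] g →
    ∫ x, f x * g x ∂μ = ∫ x, (μ[f|C₁]) x * (μ[g|C₂]) x ∂μ

namespace RelIndepOver

theorem integral_mul_eq_of_ae_bounded (h : RelIndepOver B₁ B₂ C₁ C₂ μ) {u w : X → ℝ} {K L : ℝ}
    (hu : Measurable[B₁] u) (hw : Measurable[B₂] w) (huK : ∀ᵐ x ∂μ, ‖u x‖ ≤ K)
    (hwL : ∀ᵐ x ∂μ, ‖w x‖ ≤ L) :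
    ∫ x, u x * w x ∂μ = ∫ x, (μ[u|C₁]) x * (μ[w|C₂]) x ∂μ := by
  obtain ⟨u', hu'b, hu'm, hu'u⟩ := exists_bounded_measurable_ae_eq hu huK
  obtain ⟨w', hw'b, hw'm, hw'w⟩ := exists_bounded_measurable_ae_eq hw hwL
  calc ∫ x, u x * w x ∂μ = ∫ x, u' x * w' x ∂μ := integral_congr_ae (hu'u.mul hw'w).symm
    _ = ∫ x, (μ[u'|C₁]) x * (μ[w'|C₂]) x ∂μ := h u' w' hu'b hw'b hu'm hw'm
    _ = ∫ x, (μ[u|C₁]) x * (μ[w|C₂]) x ∂μ :=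
        integral_congr_ae ((condExp_congr_ae hu'u).mul (condExp_congr_ae hw'w))

theorem integral_condExp_mul_condExp [IsFiniteMeasure μ] (h : RelIndepOver B₁ B₂ C₁ C₂ μ)
    (hB₁ : B₁ ≤ mX) (hB₂ : B₂ ≤ mX) (hC₁ : C₁ ≤ B₁) (hC₂ : C₂ ≤ B₂) {f : X → ℝ}
    (hf : MemLp f ∞ μ) :
    ∫ x, (μ[f|B₁]) x * (μ[f|B₂]) x ∂μ = ∫ x, (μ[f|C₁]) x * (μ[f|C₂]) x ∂μ := by
  have hbound := ae_le_lpNorm_exponent_top hf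
  rw [h.integral_mul_eq_of_ae_bounded stronglyMeasurable_condExp.measurable
    stronglyMeasurable_condExp.measurable (ae_bdd_norm_condExp_of_ae_bdd_norm hbound)
    (ae_bdd_norm_condExp_of_ae_bdd_norm hbound)]
  exact integral_congr_ae ((condExp_condExp_of_le hC₁ hB₁).mul (condExp_condExp_of_le hC₂ hB₂))

end RelIndepOver

end ConditionalExpectation

theorem limsup_condexp_pos_of_rel_indep_general
    {X : Type} [mX : MeasurableSpace X]
    (μ : Measure X) [IsProbabilityMeasure μ]
    (B C : ℕ → MeasurableSpace X)
    (hB : ∀ n, B n ≤ mX) (hCB : ∀ n, C n ≤ B n)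
    (hind : ∀ n m, n ≠ m → ∀ f g : X → ℝ,
      (∃ c : ℝ, ∀ x, |f x| ≤ c) → (∃ c : ℝ, ∀ x, |g x| ≤ c) →
      Measurable[B n] f → Measurable[B m] g →
      ∫ x, f x * g x ∂μ = ∫ x, (μ[f|C n]) x * (μ[g|C m]) x ∂μ)
    (f : X → ℝ) (hf : MemLp f ⊤ μ)
    (h : 0 < atTop.limsup fun n => eLpNorm (μ[f|B n]) 2 μ) :
    0 < atTop.limsup fun n => eLpNorm (μ[f|C n]) 2 μ := by
  have hf2 : MemLp f 2 μ := hf.mono_exponent le_top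
  have hfB n : MemLp (μ[f|B n]) 2 μ := hf2.condExp one_le_two
  have hfC n : MemLp (μ[f|C n]) 2 μ := hf2.condExp one_le_two
  have hproj n : ⟪(hfB n).toLp _, hf2.toLp f⟫ = ‖(hfB n).toLp _‖ ^ 2 := by
    rw [← real_inner_self_eq_norm_sq, MemLp.inner_toLp_toLp, MemLp.inner_toLp_toLp,
      integral_condExp_mul_self (hB n) hf2]
  have hcorr : Pairwise fun n m =>
      ⟪(hfB n).toLp _, (hfB m).toLp _⟫ ≤ ‖(hfC n).toLp _‖ * ‖(hfC m).toLp _‖ := fun n m hnm => by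
    beta_reduce
    rw [MemLp.inner_toLp_toLp, RelIndepOver.integral_condExp_mul_condExp (hind n m hnm) (hB n)
      (hB m) (hCB n) (hCB m) hf, ← (hfC n).inner_toLp_toLp (hfC m)]
    exact real_inner_le_norm _ _
  simp only [pos_iff_ne_zero, ne_eq, limsup_eLpNorm_eq_zero_iff_tendsto_toLp hfB,
    limsup_eLpNorm_eq_zero_iff_tendsto_toLp hfC] at h ⊢
  exact fun hC => h (tendsto_zero_of_pairwise_inner_le_norm_mul_norm hproj hcorr hC)

/-- **Lemma (pairwise relatively independent factor sequences).**
Let `(X, μ)` be a standard Borel probability space, `(B_n)` sub-σ-algebras, and `C_n ⊆ B_n`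
further sub-σ-algebras such that for `n ≠ m` the pair `(B_n, B_m)` is relatively independent
over `(C_n, C_m)`.  If `f ∈ L^∞(μ)` has `limsup_n ‖E(f|B_n)‖₂ > 0`, then also
`limsup_n ‖E(f|C_n)‖₂ > 0`. -/
theorem limsup_condexp_pos_of_rel_indep
    {X : Type} [mX : MeasurableSpace X] [StandardBorelSpace X]
    (μ : Measure X) [IsProbabilityMeasure μ]
    (B C : ℕ → MeasurableSpace X)
    (hB : ∀ n, B n ≤ mX) (hCB : ∀ n, C n ≤ B n)
    (hind : ∀ n m, n ≠ m → ∀ f g : X → ℝ,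
      (∃ c : ℝ, ∀ x, |f x| ≤ c) → (∃ c : ℝ, ∀ x, |g x| ≤ c) →
      Measurable[B n] f → Measurable[B m] g →
      ∫ x, f x * g x ∂μ = ∫ x, (μ[f|C n]) x * (μ[g|C m]) x ∂μ)
    (f : X → ℝ) (hf : MemLp f ⊤ μ)
    (h : 0 < atTop.limsup fun n => eLpNorm (μ[f|B n]) 2 μ) :
    0 < atTop.limsup fun n => eLpNorm (μ[f|C n]) 2 μ :=
  limsup_condexp_pos_of_rel_indep_general (mX := mX) μ B C hB hCB hind f hf h
end

section
/- Let n₁, n₂ ∈ ℤ² be linearly independent and m ≥ 1 an integer. Then every ℤ²-system belonging to the class Z₀^{ℤn₁} ∨ Z₀^{mℤn₂} is a factor of a ℤ²-system belonging to Z₀^{ℤn₁} ∨ Z₀^{ℤn₂}. Concretely: if (X,μ,T) is a ℤ²-system generated by a factor whose ℤn₁-subaction is trivial together with a factor whose ℤ(mn₂)-subaction is trivial, then there exists a ℤ²-system (X̃,μ̃,T̃) generated by a factor with trivial ℤn₁-subaction together with a factor with trivial ℤn₂-subaction, which admits (X,μ,T) as a factor. -/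
/-!
Let `d : ℤ² → ℤ` be a homomorphism with `d n₁ = 0` and `d n₂ = D > 0` (a determinant), and let
`ℤ²` act on `F = ℤ/m × ℤ/D` by adding `d v` to the second coordinate with carry into the first,
i.e. by addition in `ℤ/mD` written in base `D`. The extension is `X × F` with the uniform measure
on `F`. Its first factor is `Y₁ × F`, still trivial along `n₁` since `d n₁ = 0`. Its second factor
is `Y₂ × ℤ/D` with the action twisted by the carry cocycle `c`,
`v • (y, h) = (S₂ (v - c(h, d v) • n₂) y, h + d v)`, which is trivial along `n₂` because adding
`d n₂ = D` carries exactly once. Once `S₂` is modified on a null set so that `m • n₂` acts as the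
identity everywhere, `(x, k, h) ↦ (S₂ (-k • n₂) (ξ₂ x), h)` is equivariant: `k` counts carries
only modulo `m`, which `S₂` cannot see. On each fibre `X × {(k, h)}` the two new factors recover
`ξ₁` and `ξ₂`, so they still generate.
-/

open MeasureTheory

/-- A probability-preserving `ℤ²`-action. -/
def IsMPAction {X : Type} [MeasurableSpace X] (μ : Measure X) (T : ℤ × ℤ → X → X) : Prop :=
  T 0 = id ∧ (∀ m n : ℤ × ℤ, T (m + n) = T m ∘ T n) ∧ ∀ n : ℤ × ℤ, MeasurePreserving (T n) μ μ

/-- `π` is a factor map from the system `(X, μ, T)` onto the system `(Y, ν, S)`. -/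
def IsFactorMap {X Y : Type} [MeasurableSpace X] [MeasurableSpace Y]
    (μ : Measure X) (T : ℤ × ℤ → X → X) (ν : Measure Y) (S : ℤ × ℤ → Y → Y)
    (π : X → Y) : Prop :=
  Measurable π ∧ MeasurePreserving π μ ν ∧ ∀ n : ℤ × ℤ, ∀ᵐ x ∂μ, π (T n x) = S n (π x)

/-- The two factor maps `ξ₁, ξ₂` jointly generate the σ-algebra of `X` modulo `μ`. -/
def GeneratesPair {X Y₁ Y₂ : Type} [MeasurableSpace X] [MeasurableSpace Y₁] [MeasurableSpace Y₂]
    (μ : Measure X) (ξ₁ : X → Y₁) (ξ₂ : X → Y₂) : Prop :=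
  ∀ A : Set X, MeasurableSet A →
    ∃ A' : Set X,
      MeasurableSet[MeasurableSpace.comap ξ₁ inferInstance ⊔
        MeasurableSpace.comap ξ₂ inferInstance] A' ∧
      μ (symmDiff A A') = 0

open ProbabilityTheory

section Action

variable {X : Type}

def IsAction (T : ℤ × ℤ → X → X) : Prop :=
  T 0 = id ∧ ∀ a b : ℤ × ℤ, T (a + b) = T a ∘ T b

theorem IsMPAction.isAction [MeasurableSpace X] {μ : Measure X} {T : ℤ × ℤ → X → X}
    (hT : IsMPAction μ T) : IsAction T :=
  ⟨hT.1, hT.2.1⟩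

namespace IsAction

variable {T : ℤ × ℤ → X → X}

theorem apply_add (hT : IsAction T) (a b : ℤ × ℤ) (x : X) : T (a + b) x = T a (T b x) :=
  congrFun (hT.2 a b) x

theorem apply_apply_neg (hT : IsAction T) (v : ℤ × ℤ) (x : X) : T v (T (-v) x) = x := by
  rw [← hT.apply_add, add_neg_cancel, hT.1, id]

theorem bijective (hT : IsAction T) (v : ℤ × ℤ) : Function.Bijective (T v) :=
  Function.bijective_iff_has_inverse.2
    ⟨T (-v), fun x => by simpa using hT.apply_apply_neg (-v) x, hT.apply_apply_neg v⟩

theorem apply_zsmul_eq_id (hT : IsAction T) {u : ℤ × ℤ} (hu : T u = id) (k : ℤ) :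
    T (k • u) = id := by
  have hneg : T (-u) = id := funext fun x => by simpa [hu] using hT.apply_apply_neg u x
  induction k using Int.induction_on with
  | zero => simpa using hT.1
  | succ k ih => rw [add_smul, one_smul, hT.2, ih, hu]; rfl
  | pred k ih => rw [sub_smul, one_smul, sub_eq_add_neg, hT.2, ih, hneg]; rfl

theorem apply_add_zsmul_eq_of_modEq (hT : IsAction T) {u : ℤ × ℤ} {m : ℤ} (hu : T (m • u) = id)
    (v : ℤ × ℤ) {a b : ℤ} (hab : a ≡ b [ZMOD m]) : T (v + a • u) = T (v + b • u) := by
  obtain ⟨k, hk⟩ := Int.modEq_iff_dvd.1 hab.symm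
  rw [show v + a • u = k • (m • u) + (v + b • u) by
    rw [smul_smul, mul_comm, ← hk]; module, hT.2, hT.apply_zsmul_eq_id hu, Function.id_comp]

end IsAction

end Action

section MeasurePreserving

variable {X Y F : Type} [MeasurableSpace X] [MeasurableSpace Y] [MeasurableSpace F]

theorem measurePreserving_uniformOn_univ {f : F → F} (hf : Measurable f)
    (hbij : Function.Bijective f) :
    MeasurePreserving f (uniformOn Set.univ) (uniformOn Set.univ) := by
  refine ⟨hf, Measure.ext fun s hs => ?_⟩
  rw [Measure.map_apply hf hs, uniformOn, cond_apply MeasurableSet.univ,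
    cond_apply MeasurableSet.univ, Set.univ_inter, Set.univ_inter,
    Measure.count_apply (hf hs), Measure.count_apply hs, Set.encard_preimage_of_bijective hbij]

theorem IsAction.isMPAction_uniformOn_univ [DiscreteMeasurableSpace F] {R : ℤ × ℤ → F → F}
    (hR : IsAction R) : IsMPAction (uniformOn Set.univ) R :=
  ⟨hR.1, hR.2, fun v => measurePreserving_uniformOn_univ .of_discrete (hR.bijective v)⟩

theorem IsMPAction.prodMap {μ : Measure X} {κ : Measure F} [SFinite μ] [SFinite κ]
    {T : ℤ × ℤ → X → X} {R : ℤ × ℤ → F → F} (hT : IsMPAction μ T) (hR : IsMPAction κ R) :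
    IsMPAction (μ.prod κ) fun v => Prod.map (T v) (R v) :=
  ⟨by simp [hT.1, hR.1], fun a b => by simp [hT.2.1, hR.2.1, Prod.map_comp_map],
    fun v => (hT.2.2 v).prod (hR.2.2 v)⟩

theorem IsMPAction.map {μ : Measure X} {T : ℤ × ℤ → X → X} (hT : IsMPAction μ T) {π : X → Y}
    (hπ : Measurable π) {S : ℤ × ℤ → Y → Y} (hS : IsAction S) (hSm : ∀ v, Measurable (S v))
    (hπS : ∀ v, ∀ᵐ x ∂μ, π (T v x) = S v (π x)) : IsMPAction (μ.map π) S := by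
  refine ⟨hS.1, hS.2, fun v => ⟨hSm v, ?_⟩⟩
  calc (μ.map π).map (S v) = μ.map (S v ∘ π) := Measure.map_map (hSm v) hπ
    _ = μ.map (π ∘ T v) := Measure.map_congr <| by filter_upwards [hπS v] with x hx using hx.symm
    _ = (μ.map (T v)).map π := (Measure.map_map hπ (hT.2.2 v).measurable).symm
    _ = μ.map π := by rw [(hT.2.2 v).map_eq]

theorem IsMPAction.exists_ae_eq_and_eq_id [MeasurableEq Y] {ν : Measure Y}
    {S : ℤ × ℤ → Y → Y} (hS : IsMPAction ν S) {u : ℤ × ℤ} (hu : ∀ᵐ y ∂ν, S u y = y) :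
    ∃ S' : ℤ × ℤ → Y → Y, IsMPAction ν S' ∧ S' u = id ∧ ∀ v, S' v =ᵐ[ν] S v := by
  classical
  have hSm v : Measurable (S v) := (hS.2.2 v).measurable
  -- the set of points whose whole orbit is fixed by `S u` is invariant and conull
  set E : Set Y := ⋂ v, S v ⁻¹' {y | S u y = y}
  have hE : MeasurableSet E :=
    .iInter fun v => hSm v (measurableSet_eq_fun (hSm u) measurable_id)
  have hEu : E ⊆ {y | S u y = y} := fun y hy => by simpa [hS.1] using Set.mem_iInter.1 hy 0
  have hEinv v y (hy : y ∈ E) : S v y ∈ E :=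
    Set.mem_iInter.2 fun w => by simpa [hS.2.1 w v] using Set.mem_iInter.1 hy (w + v)
  have hEae : ∀ᵐ y ∂ν, y ∈ E := by
    simpa [E] using ae_all_iff.2 fun v => (hS.2.2 v).quasiMeasurePreserving.ae hu
  have hae v : (fun y => if y ∈ E then S v y else y) =ᵐ[ν] S v := by
    filter_upwards [hEae] with y hy using if_pos hy
  refine ⟨fun v y => if y ∈ E then S v y else y, ⟨?_, fun a b => ?_, fun v => ?_⟩, ?_, hae⟩
  · funext y; by_cases hy : y ∈ E <;> simp [hy, hS.1]
  · funext y; by_cases hy : y ∈ E <;> simp [hy, hEinv b y, hS.2.1 a b]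
  · refine ⟨(hSm v).ite hE measurable_id, ?_⟩
    rw [Measure.map_congr (hae v), (hS.2.2 v).map_eq]
  · funext y; by_cases hy : y ∈ E
    · simpa [hy] using hEu hy
    · simp [hy]

end MeasurePreserving

section FactorMap

variable {X Y F : Type} [MeasurableSpace X] [MeasurableSpace Y] [MeasurableSpace F]
  {μ : Measure X} {T : ℤ × ℤ → X → X} {ν : Measure Y} {S : ℤ × ℤ → Y → Y} {π : X → Y}

theorem IsFactorMap.congr_action (hπ : IsFactorMap μ T ν S π) {S' : ℤ × ℤ → Y → Y}
    (hS' : ∀ v, S' v =ᵐ[ν] S v) : IsFactorMap μ T ν S' π := by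
  refine ⟨hπ.1, hπ.2.1, fun v => ?_⟩
  filter_upwards [hπ.2.2 v, hπ.2.1.quasiMeasurePreserving.ae (hS' v)] with x hx hx'
  rw [hx, hx']

theorem IsFactorMap.prodMap (hπ : IsFactorMap μ T ν S π) (κ : Measure F) [SFinite μ] [SFinite ν]
    [SFinite κ] (R : ℤ × ℤ → F → F) :
    IsFactorMap (μ.prod κ) (fun v => Prod.map (T v) (R v)) (ν.prod κ)
      (fun v => Prod.map (S v) (R v)) (Prod.map π id) := by
  refine ⟨hπ.1.prodMap measurable_id, hπ.2.1.prod (.id κ), fun v => ?_⟩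
  filter_upwards [Measure.quasiMeasurePreserving_fst.ae (hπ.2.2 v)] with p hp
  exact Prod.ext hp rfl

theorem isFactorMap_fst (κ : Measure F) [IsProbabilityMeasure κ] (R : ℤ × ℤ → F → F) :
    IsFactorMap (μ.prod κ) (fun v => Prod.map (T v) (R v)) μ T Prod.fst :=
  ⟨measurable_fst, measurePreserving_fst, fun _ => ae_of_all _ fun _ => rfl⟩

end FactorMap

section Carry

variable {m D : ℕ} [NeZero D]

def carry (D : ℕ) (h : ZMod D) (z : ℤ) : ℤ :=
  (h.val + z) / D

theorem ZMod.val_add_intCast (h : ZMod D) (z : ℤ) : ((h + z).val : ℤ) = (h.val + z) % D := by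
  rw [← ZMod.val_intCast]; push_cast [ZMod.natCast_val, ZMod.cast_id]; rfl

theorem carry_add (h : ZMod D) (z₁ z₂ : ℤ) :
    carry D h (z₁ + z₂) = carry D h z₁ + carry D (h + z₁) z₂ := by
  have hD : (D : ℤ) ≠ 0 := by exact_mod_cast NeZero.ne D
  rw [carry, carry, carry, ZMod.val_add_intCast, add_comm ((h.val + z₁) / (D : ℤ)),
    ← Int.add_mul_ediv_left _ _ hD]
  congr 1
  linarith [Int.emod_add_mul_ediv (h.val + z₁) D]

theorem carry_zero (h : ZMod D) : carry D h 0 = 0 :=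
  Int.ediv_eq_zero_of_lt (by positivity) (by exact_mod_cast ZMod.val_lt h)

theorem carry_natCast_self (h : ZMod D) : carry D h D = 1 := by
  have hD : (D : ℤ) ≠ 0 := by exact_mod_cast NeZero.ne D
  have h0 := carry_zero h
  rw [carry, add_zero] at h0
  rw [carry, Int.add_ediv_of_dvd_right dvd_rfl, h0, Int.ediv_self hD, zero_add]

def addWithCarry (m D : ℕ) (z : ℤ) (f : ZMod m × ZMod D) : ZMod m × ZMod D :=
  (f.1 + carry D f.2 z, f.2 + z)

theorem addWithCarry_zero : addWithCarry m D 0 = id := by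
  funext f; simp [addWithCarry, carry_zero]

theorem addWithCarry_add (z₁ z₂ : ℤ) :
    addWithCarry m D (z₁ + z₂) = addWithCarry m D z₂ ∘ addWithCarry m D z₁ := by
  funext f
  simp only [addWithCarry, carry_add, Int.cast_add, Function.comp_apply, Prod.mk.injEq]
  constructor <;> ring

theorem isAction_addWithCarry (d : ℤ × ℤ →+ ℤ) : IsAction fun v => addWithCarry m D (d v) :=
  ⟨by simp [addWithCarry_zero], fun a b => by
    simp only [map_add]; rw [add_comm, addWithCarry_add]⟩

end Carry

section Twist

variable {X Y : Type} {m D : ℕ} (Q : ℤ × ℤ → Y → Y) (d : ℤ × ℤ →+ ℤ) (u : ℤ × ℤ)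

def carryTwist (D : ℕ) (v : ℤ × ℤ) (q : Y × ZMod D) : Y × ZMod D :=
  (Q (v - carry D q.2 (d v) • u) q.1, q.2 + d v)

def carryUntwist (ξ : X → Y) (p : X × (ZMod m × ZMod D)) : Y × ZMod D :=
  (Q (-((p.2.1.val : ℤ) • u)) (ξ p.1), p.2.2)

variable {Q}

theorem IsAction.carryTwist [NeZero D] (hQ : IsAction Q) : IsAction (carryTwist Q d u D) := by
  refine ⟨funext fun q => ?_, fun a b => funext fun q => ?_⟩
  · simp [_root_.carryTwist, carry_zero, hQ.1]
  · simp only [_root_.carryTwist, Function.comp_apply, map_add, Int.cast_add]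
    rw [add_comm (d a), carry_add, ← hQ.apply_add]
    refine Prod.ext (congrFun (congrArg Q ?_) q.1) ?_
    · module
    · simp only; ring

theorem carryTwist_eq_id [NeZero D] (hQ : IsAction Q) (hu : d u = D) :
    carryTwist Q d u D u = id := by
  funext q
  simp [carryTwist, hu, carry_natCast_self, hQ.1]

theorem measurable_carryTwist [NeZero D] [MeasurableSpace Y] (hQ : ∀ v, Measurable (Q v))
    (v : ℤ × ℤ) :
    Measurable (carryTwist Q d u D v) :=
  (measurable_from_prod_countable_left fun h => hQ (v - carry D h (d v) • u)).prodMk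
    ((Measurable.of_discrete (f := (· + (d v : ZMod D)))).comp measurable_snd)

theorem measurable_carryUntwist [MeasurableSpace X] [MeasurableSpace Y] [NeZero m] [NeZero D]
    (hQ : ∀ v, Measurable (Q v)) {ξ : X → Y} (hξ : Measurable ξ) :
    Measurable (carryUntwist (m := m) (D := D) Q u ξ) :=
  (measurable_from_prod_countable_left fun f => (hQ (-((f.1.val : ℤ) • u))).comp hξ).prodMk
    ((Measurable.of_discrete (f := Prod.snd)).comp measurable_snd)

theorem carryUntwist_addWithCarry [NeZero m] (hQ : IsAction Q) (hu : Q ((m : ℤ) • u) = id)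
    {ξ : X → Y} {x x' : X} {v : ℤ × ℤ} (hx : ξ x' = Q v (ξ x)) (f : ZMod m × ZMod D) :
    carryUntwist Q u ξ (x', addWithCarry m D (d v) f) =
      carryTwist Q d u D v (carryUntwist Q u ξ (x, f)) := by
  refine Prod.ext ?_ rfl
  simp only [carryUntwist, carryTwist, addWithCarry, hx]
  rw [← hQ.apply_add, ← hQ.apply_add]
  set c := carry D f.2 (d v)
  convert congrFun (hQ.apply_add_zsmul_eq_of_modEq hu v
    (a := -((f.1 + (c : ZMod m)).val : ℤ)) (b := -(c + f.1.val)) ?_) (ξ x) using 2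
  · module
  · module
  rw [← ZMod.intCast_eq_intCast_iff]
  push_cast [ZMod.natCast_zmod_val]
  ring

end Twist

section Generation

variable {X F Y₁ Y₂ Z₁ Z₂ : Type} [MeasurableSpace F] [MeasurableSpace Y₁]
  [MeasurableSpace Y₂] [MeasurableSpace Z₁] [MeasurableSpace Z₂] [MeasurableSingletonClass F]
  {ξ₁ : X → Y₁} {ξ₂ : X → Y₂} {η₁ : X × F → Z₁} {η₂ : X × F → Z₂}
  {p : Z₁ → F} (hp : Measurable p) (hpη : ∀ x f, p (η₁ (x, f)) = f)
  {g₁ : F → Z₁ → Y₁} (hg₁ : ∀ f, Measurable (g₁ f)) (hgη₁ : ∀ x f, g₁ f (η₁ (x, f)) = ξ₁ x)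
  {g₂ : F → Z₂ → Y₂} (hg₂ : ∀ f, Measurable (g₂ f)) (hgη₂ : ∀ x f, g₂ f (η₂ (x, f)) = ξ₂ x)
include hp hpη hg₁ hgη₁ hg₂ hgη₂

theorem measurableSet_prod_singleton_of_fiberwise (f : F) {C : Set X}
    (hC : MeasurableSet[MeasurableSpace.comap ξ₁ inferInstance ⊔
      MeasurableSpace.comap ξ₂ inferInstance] C) :
    MeasurableSet[MeasurableSpace.comap η₁ inferInstance ⊔
      MeasurableSpace.comap η₂ inferInstance] (C ×ˢ {f}) := by
  set 𝒢 : MeasurableSpace (X × F) :=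
    MeasurableSpace.comap η₁ inferInstance ⊔ MeasurableSpace.comap η₂ inferInstance
  have hη₁ : Measurable[𝒢] η₁ := (comap_measurable η₁).mono le_sup_left le_rfl
  have hη₂ : Measurable[𝒢] η₂ := (comap_measurable η₂).mono le_sup_right le_rfl
  have hι : Measurable[𝒢.comap (·, f), 𝒢] (·, f) := comap_measurable _
  have hle : MeasurableSpace.comap ξ₁ inferInstance ⊔ MeasurableSpace.comap ξ₂ inferInstance ≤
      𝒢.comap (·, f) := by
    refine sup_le (Measurable.comap_le ?_) (Measurable.comap_le ?_)
    · simpa [Function.comp_def, hgη₁] using (hg₁ f).comp (hη₁.comp hι)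
    · simpa [Function.comp_def, hgη₂] using (hg₂ f).comp (hη₂.comp hι)
  obtain ⟨S, hS, hSC⟩ := hle C hC
  have hfiber : MeasurableSet[𝒢] {q | q.2 = f} := by
    convert hη₁ (hp (measurableSet_singleton f)) using 1
    ext q; simp [hpη]
  convert hS.inter hfiber using 1
  ext ⟨x, f'⟩
  simp only [Set.mem_prod, Set.mem_singleton_iff, Set.mem_inter_iff, Set.mem_ofPred_eq, ← hSC]
  constructor <;> rintro ⟨hx, rfl⟩ <;> exact ⟨hx, rfl⟩

theorem GeneratesPair.prod_of_fiberwise [MeasurableSpace X] [Countable F] {μ : Measure X}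
    {κ : Measure F} [SFinite κ] (hgen : GeneratesPair μ ξ₁ ξ₂) :
    GeneratesPair (μ.prod κ) η₁ η₂ := by
  intro A hA
  choose A' hA' hnull using fun f => hgen {x | (x, f) ∈ A} (measurable_prodMk_right hA)
  refine ⟨⋃ f, A' f ×ˢ {f}, .iUnion fun f =>
    measurableSet_prod_singleton_of_fiberwise hp hpη hg₁ hgη₁ hg₂ hgη₂ f (hA' f),
    measure_mono_null (t := ⋃ f, symmDiff {x | (x, f) ∈ A} (A' f) ×ˢ {f}) ?_ <|
      measure_iUnion_null fun f => by rw [Measure.prod_prod, hnull f, zero_mul]⟩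
  rintro ⟨x, f⟩ hxf
  simpa [Set.mem_symmDiff] using hxf

end Generation

theorem exists_addMonoidHom_eq_zero_eq_natCast {n₁ n₂ : ℤ × ℤ}
    (hindep : ∀ a b : ℤ, a • n₁ + b • n₂ = 0 → a = 0 ∧ b = 0) :
    ∃ (d : ℤ × ℤ →+ ℤ) (D : ℕ), 0 < D ∧ d n₁ = 0 ∧ d n₂ = D := by
  let det : ℤ × ℤ →+ ℤ :=
    { toFun := fun v => n₁.1 * v.2 - n₁.2 * v.1
      map_zero' := by simp
      map_add' := fun a b => by simp only [Prod.fst_add, Prod.snd_add]; ring }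
  have hcomb (a b : ℤ) : a • n₁ + b • n₂ = (a * n₁.1 + b * n₂.1, a * n₁.2 + b * n₂.2) := rfl
  have hdet : det n₂ ≠ 0 := by
    intro h
    change n₁.1 * n₂.2 - n₁.2 * n₂.1 = 0 at h
    obtain ⟨h₂₂, -⟩ := hindep n₂.2 (-n₁.2) <| by
      rw [hcomb, Prod.mk_eq_zero]; constructor <;> linarith
    obtain ⟨h₂₁, -⟩ := hindep n₂.1 (-n₁.1) <| by
      rw [hcomb, Prod.mk_eq_zero]; constructor <;> linarith
    exact one_ne_zero (hindep 0 1 (by simp [Prod.ext_iff, h₂₁, h₂₂])).2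
  refine ⟨(det n₂).sign • det, (det n₂).natAbs, Int.natAbs_pos.2 hdet, ?_, ?_⟩
  · simp [det, mul_comm]
  · simp [Int.sign_mul_self]

theorem member_of_join_with_multiple_direction_is_factor_of_join_general
    (n₁ n₂ : ℤ × ℤ) (hindep : ∀ a b : ℤ, a • n₁ + b • n₂ = 0 → a = 0 ∧ b = 0)
    (m : ℕ) (hm : 1 ≤ m)
    {X : Type} [MeasurableSpace X] [StandardBorelSpace X]
    (μ : Measure X) [IsProbabilityMeasure μ] (T : ℤ × ℤ → X → X) (hT : IsMPAction μ T)
    {Y₁ : Type} [MeasurableSpace Y₁] [StandardBorelSpace Y₁]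
    (ν₁ : Measure Y₁) [IsProbabilityMeasure ν₁] (S₁ : ℤ × ℤ → Y₁ → Y₁) (hS₁ : IsMPAction ν₁ S₁)
    (htriv₁ : ∀ᵐ y ∂ν₁, S₁ n₁ y = y)
    {Y₂ : Type} [MeasurableSpace Y₂] [StandardBorelSpace Y₂]
    (ν₂ : Measure Y₂) (S₂ : ℤ × ℤ → Y₂ → Y₂) (hS₂ : IsMPAction ν₂ S₂)
    (htriv₂ : ∀ᵐ y ∂ν₂, S₂ ((m : ℤ) • n₂) y = y)
    (ξ₁ : X → Y₁) (hξ₁ : IsFactorMap μ T ν₁ S₁ ξ₁)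
    (ξ₂ : X → Y₂) (hξ₂ : IsFactorMap μ T ν₂ S₂ ξ₂)
    (hgen : GeneratesPair μ ξ₁ ξ₂) :
    ∃ (X' : Type) (_ : MeasurableSpace X') (_ : StandardBorelSpace X')
      (μ' : Measure X') (_ : IsProbabilityMeasure μ') (T' : ℤ × ℤ → X' → X')
      (Y'₁ : Type) (_ : MeasurableSpace Y'₁) (_ : StandardBorelSpace Y'₁)
      (ν'₁ : Measure Y'₁) (_ : IsProbabilityMeasure ν'₁) (S'₁ : ℤ × ℤ → Y'₁ → Y'₁)
      (Y'₂ : Type) (_ : MeasurableSpace Y'₂) (_ : StandardBorelSpace Y'₂)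
      (ν'₂ : Measure Y'₂) (_ : IsProbabilityMeasure ν'₂) (S'₂ : ℤ × ℤ → Y'₂ → Y'₂)
      (ξ'₁ : X' → Y'₁) (ξ'₂ : X' → Y'₂) (ρ : X' → X),
      IsMPAction μ' T' ∧ IsMPAction ν'₁ S'₁ ∧ IsMPAction ν'₂ S'₂ ∧
      (∀ᵐ y ∂ν'₁, S'₁ n₁ y = y) ∧ (∀ᵐ y ∂ν'₂, S'₂ n₂ y = y) ∧
      IsFactorMap μ' T' ν'₁ S'₁ ξ'₁ ∧ IsFactorMap μ' T' ν'₂ S'₂ ξ'₂ ∧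
      GeneratesPair μ' ξ'₁ ξ'₂ ∧
      IsFactorMap μ' T' μ T ρ := by
  obtain ⟨Q, hQ, hQu, hQS⟩ := hS₂.exists_ae_eq_and_eq_id htriv₂
  have hξ₂Q : IsFactorMap μ T ν₂ Q ξ₂ := hξ₂.congr_action hQS
  have hQm v : Measurable (Q v) := (hQ.2.2 v).measurable
  obtain ⟨d, D, hD, hd₁, hd₂⟩ := exists_addMonoidHom_eq_zero_eq_natCast hindep
  have : NeZero m := ⟨by omega⟩
  have : NeZero D := ⟨hD.ne'⟩
  set R : ℤ × ℤ → ZMod m × ZMod D → ZMod m × ZMod D := fun v => addWithCarry m D (d v)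
  have hR : IsMPAction (uniformOn Set.univ) R :=
    (isAction_addWithCarry d).isMPAction_uniformOn_univ
  set μ' := μ.prod (uniformOn (Set.univ : Set (ZMod m × ZMod D)))
  set η₂ := carryUntwist (m := m) (D := D) Q n₂ ξ₂
  have hη₂ : Measurable η₂ := measurable_carryUntwist n₂ hQm hξ₂.1
  have hη₂T v : ∀ᵐ p ∂μ', η₂ (Prod.map (T v) (R v) p) = carryTwist Q d n₂ D v (η₂ p) := by
    filter_upwards [Measure.quasiMeasurePreserving_fst.ae (hξ₂Q.2.2 v)] with p hp
    exact carryUntwist_addWithCarry d n₂ hQ.isAction hQu hp p.2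
  refine ⟨_, _, inferInstance, μ', inferInstance, fun v => Prod.map (T v) (R v),
    _, _, inferInstance, ν₁.prod (uniformOn Set.univ), inferInstance,
    fun v => Prod.map (S₁ v) (R v),
    _, _, inferInstance, μ'.map η₂, Measure.isProbabilityMeasure_map hη₂.aemeasurable,
    carryTwist Q d n₂ D,
    Prod.map ξ₁ id, η₂, Prod.fst, hT.prodMap hR, hS₁.prodMap hR,
    (hT.prodMap hR).map hη₂ (hQ.isAction.carryTwist d n₂) (measurable_carryTwist d n₂ hQm) hη₂T,
    ?_, ae_of_all _ fun q => by rw [carryTwist_eq_id d n₂ hQ.isAction hd₂]; rfl,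
    hξ₁.prodMap _ R, ⟨hη₂, ⟨hη₂, rfl⟩, hη₂T⟩, ?_, isFactorMap_fst _ R⟩
  · filter_upwards [Measure.quasiMeasurePreserving_fst.ae htriv₁] with q hq
    exact Prod.ext hq (by simp [R, hd₁, addWithCarry_zero])
  · exact hgen.prod_of_fiberwise (p := Prod.snd) measurable_snd (fun _ _ => rfl)
      (g₁ := fun _ => Prod.fst) (fun _ => measurable_fst) (fun _ _ => rfl)
      (g₂ := fun f z => Q ((f.1.val : ℤ) • n₂) z.1) (fun f => (hQm _).comp measurable_fst)
      (fun _ _ => hQ.isAction.apply_apply_neg _ _)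

/-- **Lemma (reducing partial invariance along a multiple of a direction).**
Let `n₁, n₂ ∈ ℤ²` be linearly independent and `m ≥ 1`.  Any `ℤ²`-system generated by a
factor with trivial `ℤn₁`-subaction together with a factor with trivial `ℤ(mn₂)`-subaction
is a factor of a `ℤ²`-system generated by a factor with trivial `ℤn₁`-subaction together
with a factor with trivial `ℤn₂`-subaction. -/
theorem member_of_join_with_multiple_direction_is_factor_of_join
    (n₁ n₂ : ℤ × ℤ) (hindep : ∀ a b : ℤ, a • n₁ + b • n₂ = 0 → a = 0 ∧ b = 0)
    (m : ℕ) (hm : 1 ≤ m)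
    {X : Type} [MeasurableSpace X] [StandardBorelSpace X]
    (μ : Measure X) [IsProbabilityMeasure μ] (T : ℤ × ℤ → X → X) (hT : IsMPAction μ T)
    {Y₁ : Type} [MeasurableSpace Y₁] [StandardBorelSpace Y₁]
    (ν₁ : Measure Y₁) [IsProbabilityMeasure ν₁] (S₁ : ℤ × ℤ → Y₁ → Y₁) (hS₁ : IsMPAction ν₁ S₁)
    (htriv₁ : ∀ᵐ y ∂ν₁, S₁ n₁ y = y)
    {Y₂ : Type} [MeasurableSpace Y₂] [StandardBorelSpace Y₂]
    (ν₂ : Measure Y₂) [IsProbabilityMeasure ν₂] (S₂ : ℤ × ℤ → Y₂ → Y₂) (hS₂ : IsMPAction ν₂ S₂)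
    (htriv₂ : ∀ᵐ y ∂ν₂, S₂ ((m : ℤ) • n₂) y = y)
    (ξ₁ : X → Y₁) (hξ₁ : IsFactorMap μ T ν₁ S₁ ξ₁)
    (ξ₂ : X → Y₂) (hξ₂ : IsFactorMap μ T ν₂ S₂ ξ₂)
    (hgen : GeneratesPair μ ξ₁ ξ₂) :
    ∃ (X' : Type) (_ : MeasurableSpace X') (_ : StandardBorelSpace X')
      (μ' : Measure X') (_ : IsProbabilityMeasure μ') (T' : ℤ × ℤ → X' → X')
      (Y'₁ : Type) (_ : MeasurableSpace Y'₁) (_ : StandardBorelSpace Y'₁)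
      (ν'₁ : Measure Y'₁) (_ : IsProbabilityMeasure ν'₁) (S'₁ : ℤ × ℤ → Y'₁ → Y'₁)
      (Y'₂ : Type) (_ : MeasurableSpace Y'₂) (_ : StandardBorelSpace Y'₂)
      (ν'₂ : Measure Y'₂) (_ : IsProbabilityMeasure ν'₂) (S'₂ : ℤ × ℤ → Y'₂ → Y'₂)
      (ξ'₁ : X' → Y'₁) (ξ'₂ : X' → Y'₂) (ρ : X' → X),
      IsMPAction μ' T' ∧ IsMPAction ν'₁ S'₁ ∧ IsMPAction ν'₂ S'₂ ∧
      (∀ᵐ y ∂ν'₁, S'₁ n₁ y = y) ∧ (∀ᵐ y ∂ν'₂, S'₂ n₂ y = y) ∧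
      IsFactorMap μ' T' ν'₁ S'₁ ξ'₁ ∧ IsFactorMap μ' T' ν'₂ S'₂ ξ'₂ ∧
      GeneratesPair μ' ξ'₁ ξ'₂ ∧
      IsFactorMap μ' T' μ T ρ :=
  member_of_join_with_multiple_direction_is_factor_of_join_general n₁ n₂ hindep m hm μ T hT ν₁ S₁
    hS₁ htriv₁ ν₂ S₂ hS₂ htriv₂ ξ₁ hξ₁ ξ₂ hξ₂ hgen
end

section
/- Let (X,μ,T) be a ℤ²-system and let p₁,p₂,p₃ ∈ ℤ² be in general position with the origin. Let μ^F be the Furstenberg self-joining of (X,μ,T) associated to T^{p₁}, T^{p₂}, T^{p₃}, i.e. the weak limit on X³ of (1/N)·Σ_{n=1}^N (T^{np₁}×T^{np₂}×T^{np₃})_*μ_Δ, where μ_Δ is the diagonal copy of μ (this limit exists). Then under μ^F the three factors ζ₀^{T^{p₁}=T^{p₂}}∘π₁, ζ₀^{T^{p₁}=T^{p₃}}∘π₁ and ζ₀^{T^{p₂}=T^{p₃}}∘π₂ are relatively independent over the common factor ζ₀^{T^{p₁}=T^{p₂}=T^{p₃}}: for all bounded measurable f₁₂ that is T^{p₁−p₂}-invariant,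 f₁₃ that is T^{p₁−p₃}-invariant and f₂₃ that is T^{p₂−p₃}-invariant, one has ∫_{X³}(f₁₂∘π₁)(f₁₃∘π₃)(f₂₃∘π₂) dμ^F = ∫_{X³}(E_μ(f₁₂|I)∘π₁)(E_μ(f₁₃|I)∘π₃)(E_μ(f₂₃|I)∘π₂) dμ^F, where I is the σ-algebra of sets invariant under both T^{p₁−p₂} and T^{p₁−p₃}. (Moreover, under μ^F one has ζ₀^{T^{p_i}=T^{p_j}}∘π_i = ζ₀^{T^{p_i}=T^{p_j}}∘π_j modulo null sets.) -/
/-! Testing `μF` on `f₁₂ ⊗ f₂₃ ⊗ f₁₃` and using the `T^{p₁-p₂}`-invariance of `f₁₂` to move its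
argument from `T^{n p₁} x` to `T^{n p₂} x`, the Furstenberg averages become ergodic averages of
`f₁₃` along `p₃ - p₂` against `f₁₂ f₂₃`. By von Neumann's mean ergodic theorem they converge to the
projection of `f₁₃` onto the `T^{p₃-p₂}`-invariant functions, and for the `T^{p₁-p₃}`-invariant
`f₁₃` this projection is `E(f₁₃ | I)`. The same projection identity, along `p₂ - p₃` and then along
`p₁ - p₂`, replaces `f₁₂` and `f₂₃` by their conditional expectations; on `I`-measurable
functions all three coordinates of the joining agree, so `μF` integrates their product like `μ`
does. The factors agree modulo `μF` because `∫ (f(wᵢ) - f(wⱼ))² dμF = 0` for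
`T^{pᵢ-pⱼ}`-invariant `f`. -/

open MeasureTheory Filter

/-- Three points of `ℤ²` are collinear. -/
def Collin (a b c : ℤ × ℤ) : Prop :=
  (b.1 - a.1) * (c.2 - a.2) = (b.2 - a.2) * (c.1 - a.1)

/-- `p₁, p₂, p₃` are in general position with the origin: no three of `0, p₁, p₂, p₃`
lie on a line. -/
def GeneralPosition (p₁ p₂ p₃ : ℤ × ℤ) : Prop :=
  ¬Collin 0 p₁ p₂ ∧ ¬Collin 0 p₁ p₃ ∧ ¬Collin 0 p₂ p₃ ∧ ¬Collin p₁ p₂ p₃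

/-- The σ-algebra of sets invariant under both `T a` and `T b`. -/
def jointInvAlg {X : Type} [MeasurableSpace X] (T : ℤ × ℤ → X → X) (a b : ℤ × ℤ) :
    MeasurableSpace X :=
  MeasurableSpace.generateFrom {A : Set X | MeasurableSet A ∧ T a ⁻¹' A = A ∧ T b ⁻¹' A = A}

open Topology

namespace IsMPAction

variable {X : Type} [MeasurableSpace X] {μ : Measure X} {T : ℤ × ℤ → X → X}

theorem measurePreserving (hT : IsMPAction μ T) (u : ℤ × ℤ) : MeasurePreserving (T u) μ μ :=
  hT.2.2 u

theorem apply_apply (hT : IsMPAction μ T) (u v : ℤ × ℤ) (x : X) : T u (T v x) = T (u + v) x :=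
  (congrFun (hT.2.1 u v) x).symm

theorem apply_neg_apply (hT : IsMPAction μ T) (u : ℤ × ℤ) (x : X) : T u (T (-u) x) = x := by
  rw [hT.apply_apply, add_neg_cancel, hT.1, id]

theorem neg_apply_apply (hT : IsMPAction μ T) (u : ℤ × ℤ) (x : X) : T (-u) (T u x) = x := by
  simpa using hT.apply_neg_apply (-u) x

theorem integral_comp (hT : IsMPAction μ T) (u : ℤ × ℤ) (f : X → ℝ) :
    ∫ x, f (T u x) ∂μ = ∫ x, f x ∂μ :=
  (hT.measurePreserving u).integral_comp'
    (f := ⟨⟨T u, T (-u), hT.neg_apply_apply u, hT.apply_neg_apply u⟩,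
      (hT.measurePreserving u).measurable, (hT.measurePreserving (-u)).measurable⟩) f

theorem iterate (hT : IsMPAction μ T) (c : ℤ × ℤ) (n : ℕ) : (T c)^[n] = T ((n : ℤ) • c) := by
  induction n with
  | zero => simp [hT.1]
  | succ n ih =>
    rw [Function.iterate_succ', ih, ← hT.2.1, Nat.cast_succ, add_smul, one_smul, add_comm]

def stabilizer (hT : IsMPAction μ T) {α : Type*} (f : X → α) : AddSubgroup (ℤ × ℤ) where
  carrier := {u | f ∘ T u = f}
  zero_mem' := by simp [hT.1]
  add_mem' {u v} (hu : f ∘ T u = f) (hv : f ∘ T v = f) := by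
    change f ∘ T (u + v) = f
    rw [hT.2.1, ← Function.comp_assoc, hu, hv]
  neg_mem' {u} (hu : f ∘ T u = f) := by
    change f ∘ T (-u) = f
    conv_lhs => rw [← hu]
    funext x
    simp [hT.apply_neg_apply]

def aeStabilizer (hT : IsMPAction μ T) {α : Type*} (f : X → α) : AddSubgroup (ℤ × ℤ) where
  carrier := {u | f ∘ T u =ᵐ[μ] f}
  zero_mem' := by simp [hT.1]
  add_mem' {u v} (hu : f ∘ T u =ᵐ[μ] f) (hv : f ∘ T v =ᵐ[μ] f) := by
    change f ∘ T (u + v) =ᵐ[μ] f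
    rw [hT.2.1, ← Function.comp_assoc]
    exact ((hT.measurePreserving v).quasiMeasurePreserving.ae_eq_comp hu).trans hv
  neg_mem' {u} (hu : f ∘ T u =ᵐ[μ] f) := by
    change f ∘ T (-u) =ᵐ[μ] f
    have := ((hT.measurePreserving (-u)).quasiMeasurePreserving.ae_eq_comp hu).symm
    rwa [Function.comp_assoc, ← hT.2.1, add_neg_cancel, hT.1, Function.comp_id] at this

theorem mem_aeStabilizer {hT : IsMPAction μ T} {α : Type*} {f : X → α} {u : ℤ × ℤ} :
    u ∈ hT.aeStabilizer f ↔ f ∘ T u =ᵐ[μ] f :=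
  Iff.rfl

theorem aeStabilizer_congr (hT : IsMPAction μ T) {α : Type*} {f g : X → α} (h : f =ᵐ[μ] g) :
    hT.aeStabilizer f = hT.aeStabilizer g := by
  suffices ∀ {f g : X → α}, f =ᵐ[μ] g → hT.aeStabilizer f ≤ hT.aeStabilizer g from
    le_antisymm (this h) (this h.symm)
  intro f g h u (hu : f ∘ T u =ᵐ[μ] f)
  exact ((hT.measurePreserving u).quasiMeasurePreserving.ae_eq_comp h.symm).trans (hu.trans h)

theorem apply_smul_eq_of_sub_mem_stabilizer (hT : IsMPAction μ T) {α : Type*} {f : X → α}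
    {u v : ℤ × ℤ} (h : u - v ∈ hT.stabilizer f) (k : ℤ) (x : X) :
    f (T (k • u) x) = f (T (k • v) x) := by
  have := congrFun (zsmul_mem h k) (T (k • v) x)
  rwa [Function.comp_apply, hT.apply_apply, ← smul_add, sub_add_cancel] at this

theorem exists_measurable_ae_eq_stabilizer_le (hT : IsMPAction μ T) {f : X → ℝ}
    (hf : Measurable f) :
    ∃ g : X → ℝ, Measurable g ∧ g =ᵐ[μ] f ∧ hT.aeStabilizer f ≤ hT.stabilizer g := by
  set S := hT.aeStabilizer f
  set E : Set X := ⋂ u : S, {x | f (T u x) = f x}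
  have hE : MeasurableSet E :=
    .iInter fun u => measurableSet_eq_fun (hf.comp (hT.measurePreserving u).measurable) hf
  have hEae : ∀ᵐ x ∂μ, x ∈ E := by
    simp only [E, Set.mem_iInter]
    exact ae_all_iff.2 fun u => u.2
  have hEinv : ∀ u ∈ S, ∀ x ∈ E, T u x ∈ E := fun u hu x hx => by
    simp only [E, Set.mem_iInter] at hx ⊢
    intro v
    change f (T v (T u x)) = f (T u x)
    rw [hT.apply_apply, hx ⟨_, add_mem v.2 hu⟩, hx ⟨u, hu⟩]
  refine ⟨E.indicator f, hf.indicator hE, ?_, fun u hu => funext fun x => ?_⟩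
  · filter_upwards [hEae] with x hx using Set.indicator_of_mem hx f
  · by_cases hx : x ∈ E
    · have hfx : f (T u x) = f x := Set.mem_iInter.1 hx ⟨u, hu⟩
      simp [Set.indicator_of_mem hx, Set.indicator_of_mem (hEinv u hu x hx), hfx]
    · have hx' : T u x ∉ E := fun h => hx (hT.neg_apply_apply u x ▸ hEinv (-u) (neg_mem hu) _ h)
      simp [Set.indicator_of_notMem hx, Set.indicator_of_notMem hx']

end IsMPAction

section jointInvAlg

variable {X : Type} [MeasurableSpace X] {μ : Measure X} {T : ℤ × ℤ → X → X} {a b : ℤ × ℤ}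

open MeasurableSpace in
theorem jointInvAlg_eq_inf : jointInvAlg T a b = invariants (T a) ⊓ invariants (T b) := by
  rw [jointInvAlg, ← @generateFrom_measurableSet X (invariants (T a) ⊓ invariants (T b))]
  congr
  ext s
  exact ⟨fun h => ⟨⟨h.1, h.2.1⟩, h.1, h.2.2⟩, fun h => ⟨h.1.1, h.1.2, h.2.2⟩⟩

theorem measurableSet_jointInvAlg {s : Set X} :
    MeasurableSet[jointInvAlg T a b] s ↔ MeasurableSet s ∧ T a ⁻¹' s = s ∧ T b ⁻¹' s = s := by
  rw [jointInvAlg_eq_inf]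
  exact ⟨fun h => ⟨h.1.1, h.1.2, h.2.2⟩, fun h => ⟨⟨h.1, h.2.1⟩, h.1, h.2.2⟩⟩

theorem jointInvAlg_le : jointInvAlg T a b ≤ ‹MeasurableSpace X› :=
  fun _ hs => (measurableSet_jointInvAlg.1 hs).1

theorem jointInvAlg_comm : jointInvAlg T a b = jointInvAlg T b a := by
  rw [jointInvAlg_eq_inf, jointInvAlg_eq_inf, inf_comm]

theorem IsMPAction.jointInvAlg_sub_left (hT : IsMPAction μ T) :
    jointInvAlg T (a - b) b = jointInvAlg T a b := by
  ext s
  have hS : ∀ u, T u ⁻¹' s = s ↔ u ∈ hT.stabilizer (· ∈ s) := fun _ => Iff.rfl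
  simp only [measurableSet_jointInvAlg, hS]
  exact and_congr_right fun _ => ⟨fun h => ⟨by simpa using add_mem h.1 h.2, h.2⟩,
    fun h => ⟨sub_mem h.1 h.2, h.2⟩⟩

theorem comp_eq_of_measurable_jointInvAlg {β : Type*} [MeasurableSpace β]
    [MeasurableSingletonClass β] {g : X → β} (hg : Measurable[jointInvAlg T a b] g) :
    g ∘ T a = g ∧ g ∘ T b = g := by
  rw [jointInvAlg_eq_inf] at hg
  exact ⟨MeasurableSpace.comp_eq_of_measurable_invariants (hg.mono inf_le_left le_rfl),
    MeasurableSpace.comp_eq_of_measurable_invariants (hg.mono inf_le_right le_rfl)⟩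

theorem measurable_jointInvAlg_of_comp_eq {β : Type*} [MeasurableSpace β] {g : X → β}
    (hg : Measurable g) (ha : g ∘ T a = g) (hb : g ∘ T b = g) :
    Measurable[jointInvAlg T a b] g := fun _ ht =>
  measurableSet_jointInvAlg.2
    ⟨hg ht, by rw [← Set.preimage_comp, ha], by rw [← Set.preimage_comp, hb]⟩

theorem IsMPAction.aestronglyMeasurable_jointInvAlg (hT : IsMPAction μ T) {f : X → ℝ}
    (hf : AEStronglyMeasurable f μ) (ha : f ∘ T a =ᵐ[μ] f) (hb : f ∘ T b =ᵐ[μ] f) :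
    AEStronglyMeasurable[jointInvAlg T a b] f μ := by
  obtain ⟨g, hg, hgf, hstab⟩ :=
    hT.exists_measurable_ae_eq_stabilizer_le hf.stronglyMeasurable_mk.measurable
  have hS : hT.aeStabilizer hf.mk = hT.aeStabilizer f := (hT.aeStabilizer_congr hf.ae_eq_mk).symm
  have hga : g ∘ T a = g := hstab (hS ▸ ha)
  have hgb : g ∘ T b = g := hstab (hS ▸ hb)
  exact ⟨g, (measurable_jointInvAlg_of_comp_eq hg hga hgb).stronglyMeasurable,
    (hgf.trans hf.ae_eq_mk.symm).symm⟩

end jointInvAlg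

theorem MeasureTheory.MemLp.integral_mul_eq_inner {X : Type} [MeasurableSpace X] {μ : Measure X}
    {φ : X → ℝ} (hφ : MemLp φ 2 μ) (g : Lp ℝ 2 μ) :
    ∫ x, φ x * g x ∂μ = inner ℝ (hφ.toLp φ) g := by
  rw [L2.inner_def]
  refine integral_congr_ae ?_
  filter_upwards [hφ.coeFn_toLp] with x hx
  rw [hx, mul_comm]
  rfl

namespace IsMPAction

variable {X : Type} [MeasurableSpace X] {μ : Measure X} {T : ℤ × ℤ → X → X}

noncomputable def koopman (hT : IsMPAction μ T) (c : ℤ × ℤ) : Lp ℝ 2 μ →L[ℝ] Lp ℝ 2 μ :=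
  (Lp.compMeasurePreservingₗᵢ ℝ (T c) (hT.measurePreserving c)).toContinuousLinearMap

theorem coeFn_koopman (hT : IsMPAction μ T) (c : ℤ × ℤ) (g : Lp ℝ 2 μ) :
    ⇑(hT.koopman c g) =ᵐ[μ] g ∘ T c :=
  Lp.coeFn_compMeasurePreserving g _

theorem norm_koopman_le (hT : IsMPAction μ T) (c : ℤ × ℤ) : ‖hT.koopman c‖ ≤ 1 :=
  LinearIsometry.norm_toContinuousLinearMap_le _

theorem coeFn_koopman_iterate (hT : IsMPAction μ T) (c : ℤ × ℤ) (n : ℕ) (g : Lp ℝ 2 μ) :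
    ⇑((hT.koopman c)^[n] g) =ᵐ[μ] g ∘ T ((n : ℤ) • c) := by
  have h : (hT.koopman c)^[n] g = Lp.compMeasurePreserving ((T c)^[n]) _ g :=
    congrFun (Lp.compMeasurePreserving_iterate _ n) g
  rw [h, ← hT.iterate]
  exact Lp.coeFn_compMeasurePreserving _ _

theorem koopman_commute (hT : IsMPAction μ T) (c d : ℤ × ℤ) :
    Function.Commute (hT.koopman c) (hT.koopman d) := fun g => by
  refine Lp.ext ?_
  have h : ∀ u v, ⇑(hT.koopman u (hT.koopman v g)) =ᵐ[μ] g ∘ T (v + u) := fun u v =>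
    (hT.coeFn_koopman u _).trans <|
      ((hT.measurePreserving u).quasiMeasurePreserving.ae_eq_comp (hT.coeFn_koopman v g)).trans
        (.of_eq (by rw [Function.comp_assoc, ← hT.2.1]))
  exact (h c d).trans ((add_comm d c) ▸ (h d c).symm)

noncomputable abbrev invariantSubspace (hT : IsMPAction μ T) (c : ℤ × ℤ) :
    Submodule ℝ (Lp ℝ 2 μ) :=
  (hT.koopman c).eqLocus (1 : Lp ℝ 2 μ →L[ℝ] Lp ℝ 2 μ)

theorem mem_invariantSubspace (hT : IsMPAction μ T) {c : ℤ × ℤ} {g : Lp ℝ 2 μ} :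
    g ∈ hT.invariantSubspace c ↔ c ∈ hT.aeStabilizer g := by
  rw [LinearMap.mem_eqLocus, mem_aeStabilizer, Lp.ext_iff]
  exact ⟨fun h => (hT.coeFn_koopman c g).symm.trans h, fun h => (hT.coeFn_koopman c g).trans h⟩

theorem toLp_mem_invariantSubspace (hT : IsMPAction μ T) {c : ℤ × ℤ} {B : X → ℝ}
    (hB : MemLp B 2 μ) : hB.toLp B ∈ hT.invariantSubspace c ↔ c ∈ hT.aeStabilizer B := by
  rw [hT.mem_invariantSubspace, hT.aeStabilizer_congr hB.coeFn_toLp]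

/-- `koopman d` commutes with `koopman c`, so it fixes every ergodic average along `c` of a
`koopman d`-fixed vector, hence also their limit. -/
theorem starProjection_mem_invariantSubspace (hT : IsMPAction μ T) (c : ℤ × ℤ) {d : ℤ × ℤ}
    {g : Lp ℝ 2 μ} (hg : g ∈ hT.invariantSubspace d) :
    (hT.invariantSubspace c).starProjection g ∈ hT.invariantSubspace d := by
  set U := hT.koopman c
  set V := hT.koopman d
  have hgV : V g = g := hg
  have htends := U.tendsto_birkhoffAverage_orthogonalProjection (hT.norm_koopman_le c) g
  have hinv : ∀ N, V (birkhoffAverage ℝ U _root_.id N g) = birkhoffAverage ℝ U _root_.id N g :=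
    fun N => by
      simp only [birkhoffAverage, birkhoffSum, id_eq, map_smul, map_sum]
      congr 1
      exact Finset.sum_congr rfl fun k _ => by
        rw [← ((hT.koopman_commute c d).iterate_left k).eq, hgV]
  show V _ = _
  rw [Submodule.starProjection_apply]
  exact tendsto_nhds_unique ((V.continuous.tendsto _).comp htends)
    (htends.congr fun N => (hinv N).symm)

theorem integral_mul_starProjection_invariantSubspace (hT : IsMPAction μ T) {c : ℤ × ℤ}
    {φ : X → ℝ} (hφ : MemLp φ 2 μ) (hφc : φ ∘ T c =ᵐ[μ] φ) (g : Lp ℝ 2 μ) :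
    ∫ x, φ x * (hT.invariantSubspace c).starProjection g x ∂μ = ∫ x, φ x * g x ∂μ := by
  rw [hφ.integral_mul_eq_inner, hφ.integral_mul_eq_inner,
    ← Submodule.inner_starProjection_left_eq_right,
    Submodule.starProjection_eq_self_iff.2 ((hT.toLp_mem_invariantSubspace hφ).2 hφc)]

variable [IsFiniteMeasure μ]

/-- The projection is invariant under `T c` and `T d`, so it has a `jointInvAlg`-measurable
version; being self-adjoint and fixing indicators of invariant sets, it preserves their
integrals. -/
theorem starProjection_invariantSubspace_ae_eq_condExp (hT : IsMPAction μ T) {c d : ℤ × ℤ}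
    {B : X → ℝ} (hB : MemLp B 2 μ) (hBd : B ∘ T d =ᵐ[μ] B) :
    ⇑((hT.invariantSubspace c).starProjection (hB.toLp B)) =ᵐ[μ] μ[B | jointInvAlg T c d] := by
  set P := (hT.invariantSubspace c).starProjection (hB.toLp B)
  have hPc : c ∈ hT.aeStabilizer P :=
    hT.mem_invariantSubspace.1 (Submodule.starProjection_apply_mem _ _)
  have hPd : d ∈ hT.aeStabilizer P := hT.mem_invariantSubspace.1
    (hT.starProjection_mem_invariantSubspace c ((hT.toLp_mem_invariantSubspace hB).2 hBd))
  refine ae_eq_condExp_of_forall_setIntegral_eq jointInvAlg_le (hB.integrable one_le_two)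
    (fun s _ _ => ((Lp.memLp P).integrable one_le_two).integrableOn) (fun s hs _ => ?_)
    (hT.aestronglyMeasurable_jointInvAlg (Lp.aestronglyMeasurable P) hPc hPd)
  obtain ⟨hsm, hsc, -⟩ := measurableSet_jointInvAlg.1 hs
  have hind : (s.indicator fun _ => (1 : ℝ)) ∘ T c = s.indicator fun _ => 1 := by
    funext x
    rw [Function.comp_apply, ← Set.indicator_comp_right, hsc]
    rfl
  have hset : ∀ g : X → ℝ, ∫ x, s.indicator (fun _ => 1) x * g x ∂μ = ∫ x in s, g x ∂μ :=
    fun g => by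
      simp_rw [← Set.indicator_mul_left, one_mul]
      exact integral_indicator hsm
  have h := hT.integral_mul_starProjection_invariantSubspace
    (memLp_indicator_const 2 hsm 1 (Or.inr (measure_ne_top μ s))) (.of_eq hind) (hB.toLp B)
  rw [hset, hset] at h
  exact h.trans (setIntegral_congr_ae hsm (hB.coeFn_toLp.mono fun x hx _ => hx))

theorem integral_mul_condExp_jointInvAlg (hT : IsMPAction μ T) {c d : ℤ × ℤ} {φ B : X → ℝ}
    (hφ : MemLp φ 2 μ) (hφc : φ ∘ T c =ᵐ[μ] φ) (hB : MemLp B 2 μ) (hBd : B ∘ T d =ᵐ[μ] B) :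
    ∫ x, φ x * μ[B | jointInvAlg T c d] x ∂μ = ∫ x, φ x * B x ∂μ := calc
  _ = ∫ x, φ x * (hT.invariantSubspace c).starProjection (hB.toLp B) x ∂μ :=
    integral_congr_ae (EventuallyEq.rfl.mul
      (hT.starProjection_invariantSubspace_ae_eq_condExp hB hBd).symm)
  _ = ∫ x, φ x * hB.toLp B x ∂μ := hT.integral_mul_starProjection_invariantSubspace hφ hφc _
  _ = _ := integral_congr_ae (EventuallyEq.rfl.mul hB.coeFn_toLp)

theorem tendsto_average_integral_mul_comp (hT : IsMPAction μ T) {c d : ℤ × ℤ} {A B : X → ℝ}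
    (hA : MemLp A 2 μ) (hB : MemLp B 2 μ) (hBd : B ∘ T d =ᵐ[μ] B) :
    Tendsto (fun N : ℕ => (N : ℝ)⁻¹ * ∑ n ∈ Finset.Icc 1 N, ∫ x, A x * B (T ((n : ℤ) • c) x) ∂μ)
      atTop (𝓝 (∫ x, A x * μ[B | jointInvAlg T c d] x ∂μ)) := by
  set U := hT.koopman c
  set Bl := hB.toLp B
  have htends := U.tendsto_birkhoffAverage_orthogonalProjection (hT.norm_koopman_le c) Bl
  rw [← Submodule.starProjection_apply] at htends
  have hlim := (((innerSL ℝ (hA.toLp A)).continuous.comp U.continuous).tendsto _).comp htends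
  have hterm : ∀ n : ℕ, ∫ x, A x * B (T ((n : ℤ) • c) x) ∂μ = inner ℝ (hA.toLp A) (U^[n] Bl) :=
    fun n => by
      rw [← hA.integral_mul_eq_inner]
      exact integral_congr_ae (EventuallyEq.rfl.mul ((hT.coeFn_koopman_iterate c n Bl).trans
        ((hT.measurePreserving _).quasiMeasurePreserving.ae_eq_comp hB.coeFn_toLp)).symm)
  have hUP : U ((hT.invariantSubspace c).starProjection Bl) =
      (hT.invariantSubspace c).starProjection Bl :=
    Submodule.starProjection_apply_mem (hT.invariantSubspace c) Bl
  convert hlim using 1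
  · funext N
    simp only [Function.comp_apply, innerSL_apply_apply, birkhoffAverage, birkhoffSum, id_eq,
      map_smul, map_sum, ← Function.iterate_succ_apply' U, ← hterm,
      Nat.succ_eq_add_one, smul_eq_mul]
    rw [Finset.range_eq_Ico, Finset.sum_Ico_add' fun n : ℕ => ∫ x, A x * B (T ((n : ℤ) • c) x) ∂μ]
    rfl
  · rw [Function.comp_apply, innerSL_apply_apply, hUP,
      ← hA.integral_mul_eq_inner]
    exact congrArg 𝓝 <| integral_congr_ae (EventuallyEq.rfl.mul
      (hT.starProjection_invariantSubspace_ae_eq_condExp hB hBd).symm)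

/-- `f₁` is replaced first, testing against the `T (b - a)`-invariant
`f₂ * μ[f₃ | jointInvAlg T a b]`; then `f₂`, testing against the `T a`-invariant product of the
other two conditional expectations. -/
theorem integral_mul_mul_condExp_jointInvAlg (hT : IsMPAction μ T) {a b : ℤ × ℤ}
    {f₁ f₂ f₃ : X → ℝ} (hf₁ : MemLp f₁ ⊤ μ) (hf₂ : MemLp f₂ ⊤ μ) (hf₃ : MemLp f₃ ⊤ μ)
    (h₁ : f₁ ∘ T a =ᵐ[μ] f₁) (h₂ : f₂ ∘ T (b - a) =ᵐ[μ] f₂) :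
    ∫ x, f₁ x * f₂ x * μ[f₃ | jointInvAlg T a b] x ∂μ =
      ∫ x, μ[f₁ | jointInvAlg T a b] x * μ[f₂ | jointInvAlg T a b] x *
        μ[f₃ | jointInvAlg T a b] x ∂μ := by
  have hJ₁ : jointInvAlg T (b - a) a = jointInvAlg T a b := by
    rw [hT.jointInvAlg_sub_left, jointInvAlg_comm]
  have hJ₂ : jointInvAlg T a (b - a) = jointInvAlg T a b := by rw [jointInvAlg_comm, hJ₁]
  have hL2 : ∀ {g : X → ℝ}, MemLp g ⊤ μ → MemLp g 2 μ := fun hg => hg.mono_exponent le_top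
  have hG : ∀ {g : X → ℝ}, MemLp g ⊤ μ → MemLp (μ[g | jointInvAlg T a b]) ⊤ μ :=
    fun hg => hg.condExp le_top
  have hGab : ∀ g : X → ℝ, a ∈ hT.stabilizer (μ[g | jointInvAlg T a b]) ∧
      b ∈ hT.stabilizer (μ[g | jointInvAlg T a b]) := fun _ =>
    comp_eq_of_measurable_jointInvAlg stronglyMeasurable_condExp.measurable
  calc ∫ x, f₁ x * f₂ x * μ[f₃ | jointInvAlg T a b] x ∂μ
      = ∫ x, f₂ x * μ[f₃ | jointInvAlg T a b] x * f₁ x ∂μ := by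
        congr 1; ext x; ring
    _ = ∫ x, f₂ x * μ[f₃ | jointInvAlg T a b] x * μ[f₁ | jointInvAlg T (b - a) a] x ∂μ :=
        (hT.integral_mul_condExp_jointInvAlg (hL2 ((hG hf₃).mul hf₂))
          (h₂.mul (.of_eq (sub_mem (hGab f₃).2 (hGab f₃).1))) (hL2 hf₁) h₁).symm
    _ = ∫ x, μ[f₁ | jointInvAlg T a b] x * μ[f₃ | jointInvAlg T a b] x * f₂ x ∂μ := by
        rw [hJ₁]; congr 1; ext x; ring
    _ = ∫ x, μ[f₁ | jointInvAlg T a b] x * μ[f₃ | jointInvAlg T a b] x *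
          μ[f₂ | jointInvAlg T a (b - a)] x ∂μ :=
        (hT.integral_mul_condExp_jointInvAlg (hL2 ((hG hf₃).mul (hG hf₁)))
          ((EventuallyEq.of_eq (hGab f₁).1).mul (.of_eq (hGab f₃).1)) (hL2 hf₂) h₂).symm
    _ = _ := by
        rw [hJ₂]; congr 1; ext x; ring

end IsMPAction

section Bounded

variable {X : Type} [MeasurableSpace X] {μ : Measure X}

theorem MeasureTheory.memLp_of_abs_le [IsFiniteMeasure μ] {f : X → ℝ} (hf : Measurable f)
    (hb : ∃ c : ℝ, ∀ x, |f x| ≤ c) (p : ENNReal) : MemLp f p μ :=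
  let ⟨c, hc⟩ := hb
  .of_bound hf.aestronglyMeasurable c (ae_of_all _ fun x => (Real.norm_eq_abs _).trans_le (hc x))

theorem MeasureTheory.exists_bounded_measurable_ae_eq_condExp {m : MeasurableSpace X}
    {f : X → ℝ} (hb : ∃ c : ℝ, ∀ x, |f x| ≤ c) :
    ∃ g : X → ℝ, Measurable[m] g ∧ (∃ c : ℝ, ∀ x, |g x| ≤ c) ∧ g =ᵐ[μ] μ[f | m] := by
  obtain ⟨c, hc⟩ := hb
  have hcond : ∀ᵐ x ∂μ, |μ[f | m] x| ≤ c := ae_bdd_abs_condExp_of_ae_bdd_abs (ae_of_all _ hc)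
  refine ⟨fun x => max (-|c|) (min |c| (μ[f | m] x)), ?_, ⟨|c|, fun x => ?_⟩, ?_⟩
  · exact measurable_const.max (measurable_const.min stronglyMeasurable_condExp.measurable)
  · exact abs_le.2 ⟨le_max_left _ _, max_le (neg_le_self (abs_nonneg c)) (min_le_left _ _)⟩
  · filter_upwards [hcond] with x hx
    obtain ⟨h₁, h₂⟩ := abs_le.1 (hx.trans (le_abs_self c))
    rw [min_eq_right h₂, max_eq_right h₁]

end Bounded

theorem Filter.tendsto_inv_mul_sum_Icc_const (r : ℝ) :
    Tendsto (fun N : ℕ => (N : ℝ)⁻¹ * ∑ _n ∈ Finset.Icc 1 N, r) atTop (𝓝 r) := by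
  refine tendsto_const_nhds.congr' ?_
  filter_upwards [eventually_ne_atTop 0] with N hN
  rw [Finset.sum_const, Nat.card_Icc, Nat.add_sub_cancel, nsmul_eq_mul, ← mul_assoc,
    inv_mul_cancel₀ (Nat.cast_ne_zero.2 hN), one_mul]

section Marginals

variable {X Y : Type} [MeasurableSpace X] [MeasurableSpace Y] {μ : Measure X} {ν : Measure Y}

theorem MeasureTheory.measurePreserving_of_forall_integral_comp_eq [IsFiniteMeasure μ]
    [IsFiniteMeasure ν] {π : Y → X} (hπ : Measurable π)
    (h : ∀ f : X → ℝ, Measurable f → (∃ c : ℝ, ∀ x, |f x| ≤ c) → ∫ y, f (π y) ∂ν = ∫ x, f x ∂μ) :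
    MeasurePreserving π ν μ := by
  refine ⟨hπ, Measure.ext fun s hs => ?_⟩
  have hind := h (s.indicator 1) (measurable_one.indicator hs)
    ⟨1, fun x => by by_cases hx : x ∈ s <;> simp [hx]⟩
  have hpre : (fun y => s.indicator (1 : X → ℝ) (π y)) = (π ⁻¹' s).indicator 1 := by
    ext y
    by_cases hy : π y ∈ s <;> simp [hy]
  rw [hpre, integral_indicator_one hs, integral_indicator_one (hπ hs)] at hind
  rw [Measure.map_apply hπ hs, ← measureReal_eq_measureReal_iff, hind]

theorem MeasureTheory.ae_eq_comp_of_integral_mul_comp_eq {π₁ π₂ : Y → X}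
    (h₁ : MeasurePreserving π₁ ν μ) (h₂ : MeasurePreserving π₂ ν μ) {f : X → ℝ}
    (hf : MemLp f 2 μ) (h : ∫ y, f (π₁ y) * f (π₂ y) ∂ν = ∫ x, f x * f x ∂μ) :
    f ∘ π₁ =ᵐ[ν] f ∘ π₂ := by
  set F := hf.toLp f
  set u := Lp.compMeasurePreserving π₁ h₁ F
  set v := Lp.compMeasurePreserving π₂ h₂ F
  have hu : ⇑u =ᵐ[ν] f ∘ π₁ := (Lp.coeFn_compMeasurePreserving F h₁).trans
    (h₁.quasiMeasurePreserving.ae_eq_comp hf.coeFn_toLp)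
  have hv : ⇑v =ᵐ[ν] f ∘ π₂ := (Lp.coeFn_compMeasurePreserving F h₂).trans
    (h₂.quasiMeasurePreserving.ae_eq_comp hf.coeFn_toLp)
  have huv : inner ℝ u v = ‖F‖ ^ 2 := calc
    inner ℝ u v = ∫ y, f (π₁ y) * f (π₂ y) ∂ν := by
      rw [L2.inner_def]
      refine integral_congr_ae ?_
      filter_upwards [hu, hv] with y hy₁ hy₂
      rw [hy₁, hy₂, mul_comm]
      rfl
    _ = inner ℝ F F := by
      rw [h, ← hf.integral_mul_eq_inner]
      exact integral_congr_ae (EventuallyEq.rfl.mul hf.coeFn_toLp.symm)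
    _ = ‖F‖ ^ 2 := real_inner_self_eq_norm_sq F
  have hsq : ‖u - v‖ ^ 2 = 0 := by
    rw [norm_sub_sq_real, huv, Lp.norm_compMeasurePreserving, Lp.norm_compMeasurePreserving]
    ring
  have huv' : u = v := sub_eq_zero.1 (norm_eq_zero.1 ((pow_eq_zero_iff two_ne_zero).1 hsq))
  exact hu.symm.trans (huv' ▸ hv)

end Marginals

/-- `μF` is the Furstenberg self-joining of `(X, μ, T)` for the directions `p₁, p₂, p₃`: the
weak limit of the averages of `(T^{n p₁} × T^{n p₂} × T^{n p₃})_* μ_Δ`, tested on products of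
bounded measurable functions. -/
def IsFurstenbergJoining {X : Type} [MeasurableSpace X] (μ : Measure X) (T : ℤ × ℤ → X → X)
    (p₁ p₂ p₃ : ℤ × ℤ) (μF : Measure (X × X × X)) : Prop :=
  ∀ f₁ f₂ f₃ : X → ℝ,
    Measurable f₁ → Measurable f₂ → Measurable f₃ →
    (∃ c : ℝ, ∀ x, |f₁ x| ≤ c) → (∃ c : ℝ, ∀ x, |f₂ x| ≤ c) → (∃ c : ℝ, ∀ x, |f₃ x| ≤ c) →
    Tendsto (fun N : ℕ => (N : ℝ)⁻¹ * ∑ n ∈ Finset.Icc 1 N,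
        ∫ x, f₁ (T ((n : ℤ) • p₁) x) * f₂ (T ((n : ℤ) • p₂) x) * f₃ (T ((n : ℤ) • p₃) x) ∂μ)
      atTop (𝓝 (∫ w, f₁ w.1 * f₂ w.2.1 * f₃ w.2.2 ∂μF))

namespace IsFurstenbergJoining

variable {X : Type} [MeasurableSpace X] {μ : Measure X} {T : ℤ × ℤ → X → X} {p₁ p₂ p₃ : ℤ × ℤ}
  {μF : Measure (X × X × X)}

theorem integral_eq_of_forall_eq_apply (hF : IsFurstenbergJoining μ T p₁ p₂ p₃ μF)
    (hT : IsMPAction μ T) {f₁ f₂ f₃ : X → ℝ} (hf₁ : Measurable f₁) (hf₂ : Measurable f₂)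
    (hf₃ : Measurable f₃) (hb₁ : ∃ c : ℝ, ∀ x, |f₁ x| ≤ c) (hb₂ : ∃ c : ℝ, ∀ x, |f₂ x| ≤ c)
    (hb₃ : ∃ c : ℝ, ∀ x, |f₃ x| ≤ c) {q : ℤ × ℤ} {F : X → ℝ}
    (h : ∀ (n : ℕ) (x : X), f₁ (T ((n : ℤ) • p₁) x) * f₂ (T ((n : ℤ) • p₂) x) *
      f₃ (T ((n : ℤ) • p₃) x) = F (T ((n : ℤ) • q) x)) :
    ∫ w, f₁ w.1 * f₂ w.2.1 * f₃ w.2.2 ∂μF = ∫ x, F x ∂μ := by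
  refine tendsto_nhds_unique (hF f₁ f₂ f₃ hf₁ hf₂ hf₃ hb₁ hb₂ hb₃) ?_
  simp only [h, hT.integral_comp]
  exact tendsto_inv_mul_sum_Icc_const _

variable [IsFiniteMeasure μ]

/-- Along the diagonal, `f₁ ∘ T^{n p₁}` may be replaced by `f₁ ∘ T^{n p₂}`; changing variables by
`T^{n p₂}` turns the averages into ergodic averages of `f₃` along `p₃ - p₂`. -/
theorem integral_eq_integral_mul_condExp (hF : IsFurstenbergJoining μ T p₁ p₂ p₃ μF)
    (hT : IsMPAction μ T) {f₁ f₂ f₃ : X → ℝ} (hf₁ : Measurable f₁) (hf₂ : Measurable f₂)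
    (hf₃ : Measurable f₃) (hb₁ : ∃ c : ℝ, ∀ x, |f₁ x| ≤ c) (hb₂ : ∃ c : ℝ, ∀ x, |f₂ x| ≤ c)
    (hb₃ : ∃ c : ℝ, ∀ x, |f₃ x| ≤ c) (h₁ : f₁ ∘ T (p₁ - p₂) = f₁) (h₃ : f₃ ∘ T (p₁ - p₃) = f₃) :
    ∫ w, f₁ w.1 * f₂ w.2.1 * f₃ w.2.2 ∂μF =
      ∫ x, f₁ x * f₂ x * μ[f₃ | jointInvAlg T (p₁ - p₂) (p₁ - p₃)] x ∂μ := by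
  have hJ : jointInvAlg T (p₃ - p₂) (p₁ - p₃) = jointInvAlg T (p₁ - p₂) (p₁ - p₃) := by
    rw [← sub_sub_sub_cancel_left p₂ p₃ p₁, hT.jointInvAlg_sub_left]
  have hterm : ∀ n : ℕ,
      ∫ x, f₁ (T ((n : ℤ) • p₁) x) * f₂ (T ((n : ℤ) • p₂) x) * f₃ (T ((n : ℤ) • p₃) x) ∂μ =
        ∫ x, f₁ x * f₂ x * f₃ (T ((n : ℤ) • (p₃ - p₂)) x) ∂μ := fun n => by
    refine Eq.trans ?_ (hT.integral_comp ((n : ℤ) • p₂) _)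
    congr 1
    ext x
    rw [hT.apply_apply, ← smul_add, sub_add_cancel, hT.apply_smul_eq_of_sub_mem_stabilizer h₁]
  refine tendsto_nhds_unique (hF f₁ f₂ f₃ hf₁ hf₂ hf₃ hb₁ hb₂ hb₃) ?_
  simp only [hterm, ← hJ]
  exact hT.tendsto_average_integral_mul_comp
    ((memLp_of_abs_le hf₂ hb₂ 2).mul (memLp_of_abs_le hf₁ hb₁ ⊤)) (memLp_of_abs_le hf₃ hb₃ 2)
    (.of_eq h₃)

variable [IsFiniteMeasure μF]

theorem measurePreserving_fst (hF : IsFurstenbergJoining μ T p₁ p₂ p₃ μF) (hT : IsMPAction μ T) :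
    MeasurePreserving (fun w : X × X × X => w.1) μF μ :=
  measurePreserving_of_forall_integral_comp_eq measurable_fst fun f hf hb => by
    have h := hF.integral_eq_of_forall_eq_apply (f₂ := fun _ => 1) (f₃ := fun _ => 1) (q := p₁)
      hT hf measurable_const measurable_const hb ⟨1, fun _ => abs_one.le⟩ ⟨1, fun _ => abs_one.le⟩
      fun n x => by rw [mul_one, mul_one]
    simpa only [mul_one] using h

theorem measurePreserving_snd_fst (hF : IsFurstenbergJoining μ T p₁ p₂ p₃ μF)
    (hT : IsMPAction μ T) : MeasurePreserving (fun w : X × X × X => w.2.1) μF μ :=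
  measurePreserving_of_forall_integral_comp_eq (measurable_fst.comp measurable_snd)
    fun f hf hb => by
      have h := hF.integral_eq_of_forall_eq_apply (f₁ := fun _ => 1) (f₃ := fun _ => 1) (q := p₂)
        hT measurable_const hf measurable_const ⟨1, fun _ => abs_one.le⟩ hb
        ⟨1, fun _ => abs_one.le⟩ fun n x => by rw [one_mul, mul_one]
      simpa only [one_mul, mul_one] using h

theorem measurePreserving_snd_snd (hF : IsFurstenbergJoining μ T p₁ p₂ p₃ μF)
    (hT : IsMPAction μ T) : MeasurePreserving (fun w : X × X × X => w.2.2) μF μ :=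
  measurePreserving_of_forall_integral_comp_eq (measurable_snd.comp measurable_snd)
    fun f hf hb => by
      have h := hF.integral_eq_of_forall_eq_apply (f₁ := fun _ => 1) (f₂ := fun _ => 1) (q := p₃)
        hT measurable_const measurable_const hf ⟨1, fun _ => abs_one.le⟩
        ⟨1, fun _ => abs_one.le⟩ hb fun n x => by rw [one_mul, one_mul]
      simpa only [one_mul] using h

theorem ae_comp_fst_eq_comp_snd_fst (hF : IsFurstenbergJoining μ T p₁ p₂ p₃ μF)
    (hT : IsMPAction μ T) {f : X → ℝ} (hf : Measurable f) (hb : ∃ c : ℝ, ∀ x, |f x| ≤ c)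
    (hi : f ∘ T (p₁ - p₂) = f) : ∀ᵐ w ∂μF, f w.1 = f w.2.1 := by
  have hcross := hF.integral_eq_of_forall_eq_apply (f₃ := fun _ => 1) (q := p₂)
    (F := fun x => f x * f x) hT hf hf measurable_const hb hb ⟨1, fun _ => abs_one.le⟩
    fun n x => by rw [mul_one, hT.apply_smul_eq_of_sub_mem_stabilizer hi]
  simp only [mul_one] at hcross
  exact ae_eq_comp_of_integral_mul_comp_eq (hF.measurePreserving_fst hT)
    (hF.measurePreserving_snd_fst hT) (memLp_of_abs_le hf hb 2) hcross

theorem ae_comp_fst_eq_comp_snd_snd (hF : IsFurstenbergJoining μ T p₁ p₂ p₃ μF)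
    (hT : IsMPAction μ T) {f : X → ℝ} (hf : Measurable f) (hb : ∃ c : ℝ, ∀ x, |f x| ≤ c)
    (hi : f ∘ T (p₁ - p₃) = f) : ∀ᵐ w ∂μF, f w.1 = f w.2.2 := by
  have hcross := hF.integral_eq_of_forall_eq_apply (f₂ := fun _ => 1) (q := p₃)
    (F := fun x => f x * f x) hT hf measurable_const hf hb ⟨1, fun _ => abs_one.le⟩ hb
    fun n x => by rw [mul_one, hT.apply_smul_eq_of_sub_mem_stabilizer hi]
  simp only [mul_one] at hcross
  exact ae_eq_comp_of_integral_mul_comp_eq (hF.measurePreserving_fst hT)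
    (hF.measurePreserving_snd_snd hT) (memLp_of_abs_le hf hb 2) hcross

theorem ae_comp_snd_fst_eq_comp_snd_snd (hF : IsFurstenbergJoining μ T p₁ p₂ p₃ μF)
    (hT : IsMPAction μ T) {f : X → ℝ} (hf : Measurable f) (hb : ∃ c : ℝ, ∀ x, |f x| ≤ c)
    (hi : f ∘ T (p₂ - p₃) = f) : ∀ᵐ w ∂μF, f w.2.1 = f w.2.2 := by
  have hcross := hF.integral_eq_of_forall_eq_apply (f₁ := fun _ => 1) (q := p₃)
    (F := fun x => f x * f x) hT measurable_const hf hf ⟨1, fun _ => abs_one.le⟩ hb hb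
    fun n x => by rw [one_mul, hT.apply_smul_eq_of_sub_mem_stabilizer hi]
  simp only [one_mul] at hcross
  exact ae_eq_comp_of_integral_mul_comp_eq (hF.measurePreserving_snd_fst hT)
    (hF.measurePreserving_snd_snd hT) (memLp_of_abs_le hf hb 2) hcross

theorem integral_condExp_eq (hF : IsFurstenbergJoining μ T p₁ p₂ p₃ μF) (hT : IsMPAction μ T)
    {f₁ f₂ f₃ : X → ℝ} (hb₁ : ∃ c : ℝ, ∀ x, |f₁ x| ≤ c) (hb₂ : ∃ c : ℝ, ∀ x, |f₂ x| ≤ c)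
    (hb₃ : ∃ c : ℝ, ∀ x, |f₃ x| ≤ c) :
    ∫ w, μ[f₁ | jointInvAlg T (p₁ - p₂) (p₁ - p₃)] w.1 *
        μ[f₂ | jointInvAlg T (p₁ - p₂) (p₁ - p₃)] w.2.1 *
        μ[f₃ | jointInvAlg T (p₁ - p₂) (p₁ - p₃)] w.2.2 ∂μF =
      ∫ x, μ[f₁ | jointInvAlg T (p₁ - p₂) (p₁ - p₃)] x *
        μ[f₂ | jointInvAlg T (p₁ - p₂) (p₁ - p₃)] x *
        μ[f₃ | jointInvAlg T (p₁ - p₂) (p₁ - p₃)] x ∂μ := by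
  -- `hF` only tests everywhere bounded functions, while conditional expectations are only a.e.
  -- bounded; the marginals of `μF` are `μ`, so bounded versions have the same integrals.
  obtain ⟨g₁, hg₁, hgb₁, he₁⟩ := exists_bounded_measurable_ae_eq_condExp (μ := μ)
    (m := jointInvAlg T (p₁ - p₂) (p₁ - p₃)) hb₁
  obtain ⟨g₂, hg₂, hgb₂, he₂⟩ := exists_bounded_measurable_ae_eq_condExp (μ := μ)
    (m := jointInvAlg T (p₁ - p₂) (p₁ - p₃)) hb₂
  obtain ⟨g₃, hg₃, hgb₃, he₃⟩ := exists_bounded_measurable_ae_eq_condExp (μ := μ)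
    (m := jointInvAlg T (p₁ - p₂) (p₁ - p₃)) hb₃
  have hshift : ∀ {g : X → ℝ}, Measurable[jointInvAlg T (p₁ - p₂) (p₁ - p₃)] g →
      ∀ (n : ℕ) (x : X), g (T ((n : ℤ) • p₂) x) = g (T ((n : ℤ) • p₁) x) ∧
        g (T ((n : ℤ) • p₃) x) = g (T ((n : ℤ) • p₁) x) := fun hg n x => by
    obtain ⟨ha, hb⟩ := comp_eq_of_measurable_jointInvAlg hg
    refine ⟨hT.apply_smul_eq_of_sub_mem_stabilizer ?_ _ x,
      hT.apply_smul_eq_of_sub_mem_stabilizer ?_ _ x⟩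
    · rw [← neg_sub]; exact neg_mem ha
    · rw [← neg_sub]; exact neg_mem hb
  have hg : ∫ w, g₁ w.1 * g₂ w.2.1 * g₃ w.2.2 ∂μF = ∫ x, g₁ x * g₂ x * g₃ x ∂μ :=
    hF.integral_eq_of_forall_eq_apply hT (hg₁.mono jointInvAlg_le le_rfl)
      (hg₂.mono jointInvAlg_le le_rfl) (hg₃.mono jointInvAlg_le le_rfl) hgb₁ hgb₂ hgb₃ (q := p₁)
      fun n x => by rw [(hshift hg₂ n x).1, (hshift hg₃ n x).2]
  have e₁ := (hF.measurePreserving_fst hT).quasiMeasurePreserving.ae_eq_comp he₁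
  have e₂ := (hF.measurePreserving_snd_fst hT).quasiMeasurePreserving.ae_eq_comp he₂
  have e₃ := (hF.measurePreserving_snd_snd hT).quasiMeasurePreserving.ae_eq_comp he₃
  calc _ = ∫ w, g₁ w.1 * g₂ w.2.1 * g₃ w.2.2 ∂μF :=
        integral_congr_ae ((e₁.mul e₂).mul e₃).symm
    _ = ∫ x, g₁ x * g₂ x * g₃ x ∂μ := hg
    _ = _ := integral_congr_ae ((he₁.mul he₂).mul he₃)

theorem integral_eq_integral_condExp (hF : IsFurstenbergJoining μ T p₁ p₂ p₃ μF)
    (hT : IsMPAction μ T) {f₁₂ f₁₃ f₂₃ : X → ℝ} (hf₁₂ : Measurable f₁₂) (hf₁₃ : Measurable f₁₃)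
    (hf₂₃ : Measurable f₂₃) (hb₁₂ : ∃ c : ℝ, ∀ x, |f₁₂ x| ≤ c) (hb₁₃ : ∃ c : ℝ, ∀ x, |f₁₃ x| ≤ c)
    (hb₂₃ : ∃ c : ℝ, ∀ x, |f₂₃ x| ≤ c) (h₁₂ : f₁₂ ∘ T (p₁ - p₂) = f₁₂)
    (h₁₃ : f₁₃ ∘ T (p₁ - p₃) = f₁₃) (h₂₃ : f₂₃ ∘ T (p₂ - p₃) = f₂₃) :
    ∫ w, f₁₂ w.1 * f₁₃ w.2.2 * f₂₃ w.2.1 ∂μF =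
      ∫ w, μ[f₁₂ | jointInvAlg T (p₁ - p₂) (p₁ - p₃)] w.1 *
        μ[f₁₃ | jointInvAlg T (p₁ - p₂) (p₁ - p₃)] w.2.2 *
        μ[f₂₃ | jointInvAlg T (p₁ - p₂) (p₁ - p₃)] w.2.1 ∂μF := by
  rw [← sub_sub_sub_cancel_left p₃ p₂ p₁] at h₂₃
  simp_rw [mul_right_comm _ (f₁₃ _), mul_right_comm _ (μ[f₁₃ | _] _)]
  rw [hF.integral_eq_integral_mul_condExp hT hf₁₂ hf₂₃ hf₁₃ hb₁₂ hb₂₃ hb₁₃ h₁₂ h₁₃,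
    hT.integral_mul_mul_condExp_jointInvAlg (memLp_of_abs_le hf₁₂ hb₁₂ ⊤)
      (memLp_of_abs_le hf₂₃ hb₂₃ ⊤) (memLp_of_abs_le hf₁₃ hb₁₃ ⊤) (.of_eq h₁₂) (.of_eq h₂₃),
    hF.integral_condExp_eq hT hb₁₂ hb₂₃ hb₁₃]

end IsFurstenbergJoining

theorem subcharacteristic_factors_relatively_independent_general
    {X : Type} [MeasurableSpace X]
    (μ : Measure X) [IsProbabilityMeasure μ]
    (T : ℤ × ℤ → X → X) (hT : IsMPAction μ T)
    (p₁ p₂ p₃ : ℤ × ℤ)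
    (μF : Measure (X × X × X)) [IsProbabilityMeasure μF]
    (hμF : ∀ f₁ f₂ f₃ : X → ℝ,
      Measurable f₁ → Measurable f₂ → Measurable f₃ →
      (∃ c : ℝ, ∀ x, |f₁ x| ≤ c) → (∃ c : ℝ, ∀ x, |f₂ x| ≤ c) → (∃ c : ℝ, ∀ x, |f₃ x| ≤ c) →
      Tendsto (fun N : ℕ => (N : ℝ)⁻¹ * ∑ n ∈ Finset.Icc 1 N,
          ∫ x, f₁ (T ((n : ℤ) • p₁) x) * f₂ (T ((n : ℤ) • p₂) x) * f₃ (T ((n : ℤ) • p₃) x) ∂μ)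
        atTop (nhds (∫ w, f₁ w.1 * f₂ w.2.1 * f₃ w.2.2 ∂μF))) :
    (∀ f₁₂ f₁₃ f₂₃ : X → ℝ,
      Measurable f₁₂ → Measurable f₁₃ → Measurable f₂₃ →
      (∃ c : ℝ, ∀ x, |f₁₂ x| ≤ c) → (∃ c : ℝ, ∀ x, |f₁₃ x| ≤ c) → (∃ c : ℝ, ∀ x, |f₂₃ x| ≤ c) →
      f₁₂ ∘ T (p₁ - p₂) = f₁₂ → f₁₃ ∘ T (p₁ - p₃) = f₁₃ → f₂₃ ∘ T (p₂ - p₃) = f₂₃ →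
      ∫ w, f₁₂ w.1 * f₁₃ w.2.2 * f₂₃ w.2.1 ∂μF =
        ∫ w, (μ[f₁₂|jointInvAlg T (p₁ - p₂) (p₁ - p₃)]) w.1 *
          (μ[f₁₃|jointInvAlg T (p₁ - p₂) (p₁ - p₃)]) w.2.2 *
          (μ[f₂₃|jointInvAlg T (p₁ - p₂) (p₁ - p₃)]) w.2.1 ∂μF) ∧
    (∀ f : X → ℝ, Measurable f → (∃ c : ℝ, ∀ x, |f x| ≤ c) →
      (f ∘ T (p₁ - p₂) = f → ∀ᵐ w ∂μF, f w.1 = f w.2.1) ∧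
      (f ∘ T (p₁ - p₃) = f → ∀ᵐ w ∂μF, f w.1 = f w.2.2) ∧
      (f ∘ T (p₂ - p₃) = f → ∀ᵐ w ∂μF, f w.2.1 = f w.2.2)) := by
  have hF : IsFurstenbergJoining μ T p₁ p₂ p₃ μF := hμF
  exact ⟨fun _ _ _ hf₁₂ hf₁₃ hf₂₃ hb₁₂ hb₁₃ hb₂₃ hi₁₂ hi₁₃ hi₂₃ =>
      hF.integral_eq_integral_condExp hT hf₁₂ hf₁₃ hf₂₃ hb₁₂ hb₁₃ hb₂₃ hi₁₂ hi₁₃ hi₂₃,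
    fun _ hf hb => ⟨hF.ae_comp_fst_eq_comp_snd_fst hT hf hb,
      hF.ae_comp_fst_eq_comp_snd_snd hT hf hb, hF.ae_comp_snd_fst_eq_comp_snd_snd hT hf hb⟩⟩

/-- **Proposition (joint distribution of the subcharacteristic isotropy factors).**
Under the Furstenberg self-joining `μ^F` of a `ℤ²`-system for three directions in general
position, the factors `ζ₀^{T^{p₁}=T^{p₂}}∘π₁`, `ζ₀^{T^{p₁}=T^{p₃}}∘π₃` and
`ζ₀^{T^{p₂}=T^{p₃}}∘π₂` are relatively independent over `ζ₀^{T^{p₁}=T^{p₂}=T^{p₃}}`,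
and each `ζ₀^{T^{pᵢ}=T^{pⱼ}}∘πᵢ` agrees with `ζ₀^{T^{pᵢ}=T^{pⱼ}}∘πⱼ` modulo `μ^F`. -/
theorem subcharacteristic_factors_relatively_independent
    {X : Type} [MeasurableSpace X] [StandardBorelSpace X]
    (μ : Measure X) [IsProbabilityMeasure μ]
    (T : ℤ × ℤ → X → X) (hT : IsMPAction μ T)
    (p₁ p₂ p₃ : ℤ × ℤ) (hgen : GeneralPosition p₁ p₂ p₃)
    (μF : Measure (X × X × X)) [IsProbabilityMeasure μF]
    (hμF : ∀ f₁ f₂ f₃ : X → ℝ,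
      Measurable f₁ → Measurable f₂ → Measurable f₃ →
      (∃ c : ℝ, ∀ x, |f₁ x| ≤ c) → (∃ c : ℝ, ∀ x, |f₂ x| ≤ c) → (∃ c : ℝ, ∀ x, |f₃ x| ≤ c) →
      Tendsto (fun N : ℕ => (N : ℝ)⁻¹ * ∑ n ∈ Finset.Icc 1 N,
          ∫ x, f₁ (T ((n : ℤ) • p₁) x) * f₂ (T ((n : ℤ) • p₂) x) * f₃ (T ((n : ℤ) • p₃) x) ∂μ)
        atTop (nhds (∫ w, f₁ w.1 * f₂ w.2.1 * f₃ w.2.2 ∂μF))) :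
    (∀ f₁₂ f₁₃ f₂₃ : X → ℝ,
      Measurable f₁₂ → Measurable f₁₃ → Measurable f₂₃ →
      (∃ c : ℝ, ∀ x, |f₁₂ x| ≤ c) → (∃ c : ℝ, ∀ x, |f₁₃ x| ≤ c) → (∃ c : ℝ, ∀ x, |f₂₃ x| ≤ c) →
      f₁₂ ∘ T (p₁ - p₂) = f₁₂ → f₁₃ ∘ T (p₁ - p₃) = f₁₃ → f₂₃ ∘ T (p₂ - p₃) = f₂₃ →
      ∫ w, f₁₂ w.1 * f₁₃ w.2.2 * f₂₃ w.2.1 ∂μF =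
        ∫ w, (μ[f₁₂|jointInvAlg T (p₁ - p₂) (p₁ - p₃)]) w.1 *
          (μ[f₁₃|jointInvAlg T (p₁ - p₂) (p₁ - p₃)]) w.2.2 *
          (μ[f₂₃|jointInvAlg T (p₁ - p₂) (p₁ - p₃)]) w.2.1 ∂μF) ∧
    (∀ f : X → ℝ, Measurable f → (∃ c : ℝ, ∀ x, |f x| ≤ c) →
      (f ∘ T (p₁ - p₂) = f → ∀ᵐ w ∂μF, f w.1 = f w.2.1) ∧
      (f ∘ T (p₁ - p₃) = f → ∀ᵐ w ∂μF, f w.1 = f w.2.2) ∧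
      (f ∘ T (p₂ - p₃) = f → ∀ᵐ w ∂μF, f w.2.1 = f w.2.2)) :=
  subcharacteristic_factors_relatively_independent_general μ T hT p₁ p₂ p₃ μF hμF
end
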